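/- arXiv:2305.15577 — 7 statements merged into one kernel-verified Lean document; each statement's English description precedes it below -/
import Mathlib

section
/- Let p, q : ℝ^d → (0,∞) be continuously differentiable probability densities, let x⋆ ∈ ℝ^d and σ > 0, and let k_σ(x) := exp(−‖x−x⋆‖²/(2σ²)). Assume that for each coordinate i and almost every value of the remaining coordinates x_{−i}, q(x)·k_σ(x) → 0 as x_i → ±∞, and that the functions q·k_σ·∇log p, q·k_σ·∇log q and q·∇k_σ are integrable on ℝ^d. Then ∫ q(x) k_σ(x) ∇log(p(x)/q(x)) dx = ∫ [ q(x) k_σ(x) ∇log p(x) + q(x) ∇k_σ(x) ] dx. -/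
open MeasureTheory Filter

lemma integral_pderiv_eq_zero {d : ℕ} (F : EuclideanSpace ℝ (Fin d) → ℝ)
    (hF : ContDiff ℝ 1 F) (i : Fin d)
    (hvan : ∀ᵐ x : EuclideanSpace ℝ (Fin d),
      Tendsto (fun t : ℝ => F (WithLp.toLp 2 (Function.update x i t))) atTop (nhds 0) ∧
      Tendsto (fun t : ℝ => F (WithLp.toLp 2 (Function.update x i t))) atBot (nhds 0))
    (hint : Integrable fun x => fderiv ℝ F x (EuclideanSpace.single i (1:ℝ))) :
    ∫ x, fderiv ℝ F x (EuclideanSpace.single i (1:ℝ)) = 0 := by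
  obtain ⟨n, rfl⟩ : ∃ n, d = n + 1 :=
    ⟨d - 1, (Nat.succ_pred_eq_of_pos i.pos).symm⟩
  set v : EuclideanSpace ℝ (Fin (n + 1)) := EuclideanSpace.single i (1:ℝ) with hv
  set J : EuclideanSpace ℝ (Fin (n + 1)) → ℝ := fun x => fderiv ℝ F x v with hJ
  let φ : (Fin (n + 1) → ℝ) ≃ᵐ EuclideanSpace ℝ (Fin (n + 1)) :=
    MeasurableEquiv.toLp 2 (Fin (n + 1) → ℝ)
  have hφ : MeasurePreserving φ :=
    (EuclideanSpace.volume_preserving_symm_measurableEquiv_toLp (Fin (n + 1))).symm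
  let e : (Fin (n + 1) → ℝ) ≃ᵐ ℝ × (Fin n → ℝ) :=
    MeasurableEquiv.piFinSuccAbove (fun _ => ℝ) i
  have he : MeasurePreserving e.symm :=
    (volume_preserving_piFinSuccAbove (fun _ : Fin (n + 1) => ℝ) i).symm e
  set Ψ : (ℝ × (Fin n → ℝ)) ≃ᵐ EuclideanSpace ℝ (Fin (n + 1)) :=
    e.symm.trans φ with hΨdef
  have hΨ : MeasurePreserving Ψ := hφ.comp he
  -- geometry
  have hΨapp : ∀ (t : ℝ) (y : Fin n → ℝ), Ψ (t, y) = WithLp.toLp 2 (i.insertNth t y) := fun t y => rfl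
  have hupd : ∀ (t s : ℝ) (y : Fin n → ℝ),
      WithLp.toLp 2 (Function.update (Ψ (t, y)) i s) = Ψ (s, y) := by
    intro t s y
    ext j
    rcases eq_or_ne j i with rfl | hj
    · simp [hΨapp, Fin.insertNth_apply_same]
    · obtain ⟨l, hl⟩ := Fin.exists_succAbove_eq hj
      subst hl
      simp [Function.update_of_ne hj, hΨapp, Fin.insertNth_apply_succAbove]
  have hcurve : ∀ (y : Fin n → ℝ), (fun s : ℝ => Ψ (s, y)) =
      fun s : ℝ => Ψ (0, y) + s • v := by
    intro y
    funext s
    ext j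
    rcases eq_or_ne j i with rfl | hj
    · simp [hΨapp, hv, PiLp.add_apply, PiLp.smul_apply, EuclideanSpace.single_apply,
        Fin.insertNth_apply_same]
    · obtain ⟨l, hl⟩ := Fin.exists_succAbove_eq hj
      subst hl
      simp [hΨapp, hv, PiLp.add_apply, PiLp.smul_apply, EuclideanSpace.single_apply,
        Fin.insertNth_apply_succAbove, Fin.succAbove_ne i l]
  -- transfer of integrability
  have hintΨ : Integrable (fun w : ℝ × (Fin n → ℝ) => J (Ψ w)) :=
    (hΨ.integrable_comp_emb Ψ.measurableEmbedding).2 hint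
  rw [Measure.volume_eq_prod] at hintΨ
  -- transfer of vanishing
  have hvanΨ : ∀ᵐ w : ℝ × (Fin n → ℝ),
      Tendsto (fun t : ℝ => F (WithLp.toLp 2 (Function.update (Ψ w) i t))) atTop (nhds 0) ∧
      Tendsto (fun t : ℝ => F (WithLp.toLp 2 (Function.update (Ψ w) i t))) atBot (nhds 0) := by
    rw [← hΨ.map_eq] at hvan
    exact Ψ.measurableEmbedding.ae_map_iff.1 hvan
  rw [Measure.volume_eq_prod] at hvanΨ
  have hvan2 := Measure.ae_ae_of_ae_prod hvanΨ
  obtain ⟨t₀, ht₀⟩ := hvan2.exists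
  -- slicewise integrability
  have hslice_int : ∀ᵐ y : Fin n → ℝ, Integrable (fun t : ℝ => J (Ψ (t, y))) :=
    hintΨ.swap.prod_right_ae
  -- slicewise vanishing of integral
  have hzero : ∀ᵐ y : Fin n → ℝ, (∫ t : ℝ, J (Ψ (t, y))) = 0 := by
    filter_upwards [hslice_int, ht₀] with y hy1 hy2
    have hd : ∀ t : ℝ, HasDerivAt (fun s : ℝ => F (Ψ (s, y))) (J (Ψ (t, y))) t := by
      intro t
      have hc : HasDerivAt (fun s : ℝ => Ψ (0, y) + s • v) v t := by
        simpa using ((hasDerivAt_id t).smul_const v).const_add (Ψ (0, y))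
      have := ((hF.differentiable one_ne_zero) (Ψ (t, y))).hasFDerivAt.comp_hasDerivAt t
        (by rw [← hcurve y] at hc; exact hc)
      exact this
    have hup : (fun s : ℝ => F (WithLp.toLp 2 (Function.update (Ψ (t₀, y)) i s)))
        = fun s : ℝ => F (Ψ (s, y)) := by
      funext s; rw [hupd]
    rw [hup] at hy2
    have := integral_of_hasDerivAt_of_tendsto hd hy1 hy2.2 hy2.1
    simpa using this
  -- put together
  calc ∫ x, J x
      = ∫ w : ℝ × (Fin n → ℝ), J (Ψ w) := (hΨ.integral_comp' J).symm
    _ = ∫ y : Fin n → ℝ, ∫ t : ℝ, J (Ψ (t, y)) := by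
        rw [Measure.volume_eq_prod, integral_prod_symm _ hintΨ]
    _ = ∫ y : Fin n → ℝ, (0:ℝ) := integral_congr_ae hzero
    _ = 0 := integral_zero _ _

/-- Integration-by-parts identity showing that the Nadaraya–Watson numerator for the
backward KL velocity field `∇log(p/q)` is tractable given `∇log p`:
`∫ q k ∇log(p/q) = ∫ (q k ∇log p + q ∇k)`. -/
theorem stmt0 {d : ℕ}
    (p q : EuclideanSpace ℝ (Fin d) → ℝ)
    (hp : ∀ x, 0 < p x) (hq : ∀ x, 0 < q x)
    (hpC : ContDiff ℝ 1 p) (hqC : ContDiff ℝ 1 q)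
    (hpdens : ∫ x, p x = 1) (hqdens : ∫ x, q x = 1)
    (xstar : EuclideanSpace ℝ (Fin d)) (σ : ℝ) (hσ : 0 < σ)
    (k : EuclideanSpace ℝ (Fin d) → ℝ)
    (hk : ∀ x, k x = Real.exp (-‖x - xstar‖ ^ 2 / (2 * σ ^ 2)))
    (hvanish : ∀ i : Fin d, ∀ᵐ x : EuclideanSpace ℝ (Fin d),
      Tendsto (fun t : ℝ => q (WithLp.toLp 2 (Function.update x i t)) * k (WithLp.toLp 2 (Function.update x i t)))
        atTop (nhds 0) ∧
      Tendsto (fun t : ℝ => q (WithLp.toLp 2 (Function.update x i t)) * k (WithLp.toLp 2 (Function.update x i t)))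
        atBot (nhds 0))
    (hint1 : Integrable fun x => (q x * k x) • gradient (fun y => Real.log (p y)) x)
    (hint2 : Integrable fun x => (q x * k x) • gradient (fun y => Real.log (q y)) x)
    (hint3 : Integrable fun x => q x • gradient k x) :
    ∫ x, (q x * k x) • gradient (fun y => Real.log (p y / q y)) x
      = ∫ x, ((q x * k x) • gradient (fun y => Real.log (p y)) x + q x • gradient k x) := by
  classical
  have hpd : ∀ x, DifferentiableAt ℝ p x := fun x => (hpC.differentiable one_ne_zero) x
  have hqd : ∀ x, DifferentiableAt ℝ q x := fun x => (hqC.differentiable one_ne_zero) x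
  have hkC : ContDiff ℝ 1 k := by
    have hkk : k = fun x => Real.exp (-‖x - xstar‖ ^ 2 / (2 * σ ^ 2)) := funext hk
    rw [hkk]
    exact (((contDiff_id.sub contDiff_const).norm_sq ℝ).neg.div_const _).exp
  have hkd : ∀ x, DifferentiableAt ℝ k x := fun x => (hkC.differentiable one_ne_zero) x
  have hlogp : ∀ x, DifferentiableAt ℝ (fun y => Real.log (p y)) x :=
    fun x => (hpd x).log (hp x).ne'
  have hlogq : ∀ x, DifferentiableAt ℝ (fun y => Real.log (q y)) x :=
    fun x => (hqd x).log (hq x).ne'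
  have hfq : ∀ x, fderiv ℝ (fun y => Real.log (q y)) x = (q x)⁻¹ • fderiv ℝ q x :=
    fun x => ((hqd x).hasFDerivAt.log (hq x).ne').fderiv
  have hgradsub : ∀ x, gradient (fun y => Real.log (p y / q y)) x
      = gradient (fun y => Real.log (p y)) x - gradient (fun y => Real.log (q y)) x := by
    intro x
    have hfun : (fun y => Real.log (p y / q y))
        = fun y => Real.log (p y) - Real.log (q y) :=
      funext fun y => Real.log_div (hp y).ne' (hq y).ne'
    rw [hfun]
    unfold gradient
    rw [fderiv_fun_sub (hlogp x) (hlogq x), map_sub]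
  have hL : (fun x => (q x * k x) • gradient (fun y => Real.log (p y / q y)) x)
      = fun x => (q x * k x) • gradient (fun y => Real.log (p y)) x
        - (q x * k x) • gradient (fun y => Real.log (q y)) x :=
    funext fun x => by rw [hgradsub x, smul_sub]
  rw [hL, integral_sub hint1 hint2, integral_add hint1 hint3]
  -- reduce to showing the remaining integral vanishes
  set F : EuclideanSpace ℝ (Fin d) → ℝ := fun x => q x * k x with hFdef
  have hFC : ContDiff ℝ 1 F := hqC.mul hkC
  have hgradF : ∀ x, (q x * k x) • gradient (fun y => Real.log (q y)) x
      + q x • gradient k x = gradient F x := by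
    intro x
    have e1 : gradient (fun y => Real.log (q y)) x = (q x)⁻¹ • gradient q x := by
      unfold gradient
      rw [hfq x, _root_.map_smul]
    have e2 : gradient F x = q x • gradient k x + k x • gradient q x := by
      unfold gradient
      rw [hFdef]
      rw [fderiv_fun_mul (hqd x) (hkd x), map_add, _root_.map_smul, _root_.map_smul]
    rw [e1, e2, smul_smul]
    have e3 : q x * k x * (q x)⁻¹ = k x := by
      rw [mul_comm (q x) (k x), mul_assoc, mul_inv_cancel₀ (hq x).ne', mul_one]
    rw [e3]
    abel
  have hintF : Integrable (fun x => gradient F x) := by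
    exact (hint2.add hint3).congr (ae_of_all _ fun x => by simpa using hgradF x)
  have hzero : ∫ x, ((q x * k x) • gradient (fun y => Real.log (q y)) x
      + q x • gradient k x) = 0 := by
    simp only [hgradF]
    -- show the integral of the gradient of F is zero, coordinatewise
    have hco : ∀ i : Fin d, (∫ x, gradient F x) i = 0 := by
      intro i
      have h1 : ∫ x, (EuclideanSpace.proj (𝕜 := ℝ) i) (gradient F x)
          = (EuclideanSpace.proj (𝕜 := ℝ) i) (∫ x, gradient F x) :=
        ContinuousLinearMap.integral_comp_comm _ hintF
      have h2 : ∀ x, (gradient F x) i = fderiv ℝ F x (EuclideanSpace.single i (1:ℝ)) := by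
        intro x
        have h3 : fderiv ℝ F x (EuclideanSpace.single i (1:ℝ))
            = (inner ℝ (gradient F x) (EuclideanSpace.single i (1:ℝ)) : ℝ) := by
          unfold gradient
          rw [InnerProductSpace.toDual_symm_apply]
        rw [h3, EuclideanSpace.inner_single_right]
        simp
      have h4 : ∫ x, fderiv ℝ F x (EuclideanSpace.single i (1:ℝ)) = 0 :=
        integral_pderiv_eq_zero F hFC i (hvanish i)
          (by simp_rw [← h2]
              exact (EuclideanSpace.proj (𝕜 := ℝ) i).integrable_comp hintF)
      have h5 : (∫ x, gradient F x) i = ∫ x, (gradient F x) i := by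
        simpa using h1.symm
      rw [h5]
      simp_rw [h2]
      exact h4
    ext i
    simpa using hco i
  rw [integral_add hint2 hint3] at hzero
  have h6 : ∫ x, q x • gradient k x
      = -∫ x, (q x * k x) • gradient (fun y => Real.log (q y)) x :=
    eq_neg_of_add_eq_zero_right hzero
  rw [h6]
  abel
end

section
/- Let p, q : ℝ^d → (0,∞) be probability densities such that the log density ratio log r, with r := p/q, is twice continuously differentiable and satisfies sup_{x∈ℝ^d} ‖∇²log r(x)‖_op ≤ κ < ∞. Fix x⋆ ∈ ℝ^d and σ > 0, and let k_σ(x) := exp(−‖x−x⋆‖²/(2σ²)). Assume ∫ q(x⋆+σy) e^{−‖y‖²/2} dy > 0 and ∫ q(x⋆+σy) e^{−‖y‖²/2} ‖y‖ dy ≤ C_k · ∫ q(x⋆+σy) e^{−‖y‖²/2} dy, with all displayed integrals finite. Then ‖ (∫ q(x) k_σ(x) ∇log r(x) dx) / (∫ q(x) k_σ(x) dx) − ∇log r(x⋆) ‖ ≤ √d · κ · σ · C_k. -/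
open MeasureTheory

set_option maxHeartbeats 1000000

/-- Population bias bound underlying Proposition 1: the Nadaraya–Watson interpolation of
the backward KL velocity field `∇log r` at `x⋆` has bias at most `√d · κ · σ · C_k`. -/
theorem stmt1 {d : ℕ}
    (p q : EuclideanSpace ℝ (Fin d) → ℝ)
    (hp : ∀ x, 0 < p x) (hq : ∀ x, 0 < q x)
    (hpdens : ∫ x, p x = 1) (hqdens : ∫ x, q x = 1)
    (r : EuclideanSpace ℝ (Fin d) → ℝ) (hr : ∀ x, r x = p x / q x)
    (hC2 : ContDiff ℝ 2 fun x => Real.log (r x))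
    (κ : ℝ)
    (hκ : ∀ x, ‖fderiv ℝ (gradient fun y => Real.log (r y)) x‖ ≤ κ)
    (xstar : EuclideanSpace ℝ (Fin d)) (σ : ℝ) (hσ : 0 < σ)
    (k : EuclideanSpace ℝ (Fin d) → ℝ)
    (hk : ∀ x, k x = Real.exp (-‖x - xstar‖ ^ 2 / (2 * σ ^ 2)))
    (Ck : ℝ)
    (hIy0 : Integrable fun y : EuclideanSpace ℝ (Fin d) =>
      q (xstar + σ • y) * Real.exp (-‖y‖ ^ 2 / 2))
    (hIy1 : Integrable fun y : EuclideanSpace ℝ (Fin d) =>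
      q (xstar + σ • y) * Real.exp (-‖y‖ ^ 2 / 2) * ‖y‖)
    (hdenpos : 0 < ∫ y : EuclideanSpace ℝ (Fin d),
      q (xstar + σ • y) * Real.exp (-‖y‖ ^ 2 / 2))
    (hmom : (∫ y : EuclideanSpace ℝ (Fin d),
        q (xstar + σ • y) * Real.exp (-‖y‖ ^ 2 / 2) * ‖y‖)
      ≤ Ck * ∫ y : EuclideanSpace ℝ (Fin d),
        q (xstar + σ • y) * Real.exp (-‖y‖ ^ 2 / 2))
    (hInum : Integrable fun x => (q x * k x) • gradient (fun y => Real.log (r y)) x)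
    (hIden : Integrable fun x => q x * k x) :
    ‖(∫ x, q x * k x)⁻¹ • (∫ x, (q x * k x) • gradient (fun y => Real.log (r y)) x)
        - gradient (fun y => Real.log (r y)) xstar‖
      ≤ Real.sqrt d * κ * σ * Ck := by
  rcases Nat.eq_zero_or_pos d with hd | hd
  · subst hd
    haveI : Subsingleton (EuclideanSpace ℝ (Fin 0)) :=
      ⟨fun a b => PiLp.ext fun i => i.elim0⟩
    have hz : ((∫ x, q x * k x)⁻¹ •
          (∫ x, (q x * k x) • gradient (fun y => Real.log (r y)) x)
        - gradient (fun y => Real.log (r y)) xstar)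
        = (0 : EuclideanSpace ℝ (Fin 0)) := Subsingleton.elim _ _
    rw [hz, norm_zero]
    simp
  -- notation
  set g : EuclideanSpace ℝ (Fin d) → EuclideanSpace ℝ (Fin d) :=
    gradient (fun y => Real.log (r y)) with hg_def
  set I0 : ℝ := ∫ y : EuclideanSpace ℝ (Fin d),
      q (xstar + σ • y) * Real.exp (-‖y‖ ^ 2 / 2) with hI0
  set I1 : ℝ := ∫ y : EuclideanSpace ℝ (Fin d),
      q (xstar + σ • y) * Real.exp (-‖y‖ ^ 2 / 2) * ‖y‖ with hI1
  have hσne : σ ≠ 0 := hσ.ne'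
  have hκ0 : 0 ≤ κ := le_trans (norm_nonneg _) (hκ xstar)
  have hI1nn : 0 ≤ I1 := integral_nonneg fun y => by
    have := (hq (xstar + σ • y)).le
    positivity
  have hCk0 : 0 ≤ Ck := by
    by_contra h
    push_neg at h
    nlinarith
  have hknn : ∀ x, 0 ≤ k x := fun x => by rw [hk x]; exact (Real.exp_pos _).le
  have hqknn : ∀ x, 0 ≤ q x * k x := fun x => mul_nonneg (hq x).le (hknn x)
  have hfr : Module.finrank ℝ (EuclideanSpace ℝ (Fin d)) = d :=
    finrank_euclideanSpace_fin
  -- the exponential kernel after the change of variables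
  have hkarg : ∀ y : EuclideanSpace ℝ (Fin d),
      Real.exp (-‖σ • y‖ ^ 2 / (2 * σ ^ 2)) = Real.exp (-‖y‖ ^ 2 / 2) := by
    intro y
    congr 1
    rw [norm_smul, Real.norm_eq_abs, mul_pow, sq_abs]
    field_simp
  have hkpt : ∀ y : EuclideanSpace ℝ (Fin d),
      k (xstar + σ • y) = Real.exp (-‖y‖ ^ 2 / 2) := by
    intro y
    rw [hk, add_sub_cancel_left, hkarg]
  -- change of variables for the denominator
  have key0 : ∫ x, q x * k x = σ ^ d * I0 := by
    have h1 : ∫ z, q (xstar + z) * k (xstar + z) = ∫ x, q x * k x :=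
      integral_add_left_eq_self (fun x => q x * k x) xstar
    have h2 : ∫ y, (fun z => q (xstar + z) * k (xstar + z)) (σ • y)
        = (σ ^ d)⁻¹ • ∫ z, q (xstar + z) * k (xstar + z) := by
      rw [MeasureTheory.Measure.integral_comp_smul_of_nonneg (volume)
        (fun z => q (xstar + z) * k (xstar + z)) σ (hR := hσ.le), hfr]
    have h3 : (∫ y, (fun z => q (xstar + z) * k (xstar + z)) (σ • y)) = I0 := by
      simp only [hI0]
      congr 1
      funext y
      rw [hkpt]
    rw [← h1]
    rw [h3] at h2
    rw [smul_eq_mul] at h2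
    have hσd : (σ:ℝ) ^ d ≠ 0 := by positivity
    field_simp at h2
    linarith [h2]
  have hDpos : 0 < ∫ x, q x * k x := by
    rw [key0]; positivity
  have hDne : (∫ x, q x * k x) ≠ 0 := hDpos.ne'
  -- change of variables for the first moment
  have key1 : ∫ x, q x * k x * ‖x - xstar‖ = σ ^ d * (σ * I1) := by
    have h1 : ∫ z, q (xstar + z) * k (xstar + z) * ‖(xstar + z) - xstar‖
        = ∫ x, q x * k x * ‖x - xstar‖ :=
      integral_add_left_eq_self (fun x => q x * k x * ‖x - xstar‖) xstar
    have h2 : ∫ y, (fun z => q (xstar + z) * k (xstar + z) * ‖(xstar + z) - xstar‖) (σ • y)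
        = (σ ^ d)⁻¹ • ∫ z, q (xstar + z) * k (xstar + z) * ‖(xstar + z) - xstar‖ := by
      rw [MeasureTheory.Measure.integral_comp_smul_of_nonneg (volume)
        (fun z => q (xstar + z) * k (xstar + z) * ‖(xstar + z) - xstar‖) σ (hR := hσ.le), hfr]
    have h3 : (∫ y, (fun z => q (xstar + z) * k (xstar + z) * ‖(xstar + z) - xstar‖) (σ • y))
        = σ * I1 := by
      have hfe : (fun y : EuclideanSpace ℝ (Fin d) =>
          (fun z => q (xstar + z) * k (xstar + z) * ‖(xstar + z) - xstar‖) (σ • y))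
          = fun y => σ • (q (xstar + σ • y) * Real.exp (-‖y‖ ^ 2 / 2) * ‖y‖) := by
        funext y
        simp only [hkpt, add_sub_cancel_left, norm_smul, Real.norm_eq_abs,
          abs_of_pos hσ, smul_eq_mul]
        ring
      rw [hfe, integral_smul, smul_eq_mul, hI1]
    rw [← h1]
    rw [h3] at h2
    rw [smul_eq_mul] at h2
    have hσd : (σ:ℝ) ^ d ≠ 0 := by positivity
    field_simp at h2
    simp only [add_sub_cancel_left] at h2 ⊢
    linarith [h2]
  -- integrability of the moment weight
  have hJ1 : Integrable (fun x => q x * k x * ‖x - xstar‖) := by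
    have h3 : Integrable (fun y : EuclideanSpace ℝ (Fin d) =>
        q (xstar + σ • y) * k (xstar + σ • y) * ‖(xstar + σ • y) - xstar‖) := by
      have := hIy1.const_mul σ
      apply this.congr
      filter_upwards with y
      simp only [hkpt, add_sub_cancel_left, norm_smul, Real.norm_eq_abs, abs_of_pos hσ]
      ring
    have h4 : Integrable (fun z : EuclideanSpace ℝ (Fin d) =>
        q (xstar + z) * k (xstar + z) * ‖(xstar + z) - xstar‖) :=
      (integrable_comp_smul_iff volume
        (fun z => q (xstar + z) * k (xstar + z) * ‖(xstar + z) - xstar‖) hσne).1 h3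
    have h5 := h4.comp_add_left (-xstar)
    apply h5.congr
    filter_upwards with x
    simp [add_neg_cancel_left]
  -- Lipschitz bound for the gradient
  have hgC : ContDiff ℝ 1 g := by
    have h1 : ContDiff ℝ 1 (fderiv ℝ fun x => Real.log (r x)) :=
      hC2.fderiv_right (by norm_num)
    have h2 : g = fun x =>
        (InnerProductSpace.toDual ℝ (EuclideanSpace ℝ (Fin d))).symm
          (fderiv ℝ (fun y => Real.log (r y)) x) := rfl
    rw [h2]
    exact (InnerProductSpace.toDual ℝ
      (EuclideanSpace ℝ (Fin d))).symm.toContinuousLinearEquiv.contDiff.comp h1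
  have hlip : ∀ x, ‖g x - g xstar‖ ≤ κ * ‖x - xstar‖ := fun x =>
    Convex.norm_image_sub_le_of_norm_fderiv_le
      (fun y _ => (hgC.differentiable one_ne_zero).differentiableAt)
      (fun y _ => hκ y) convex_univ (Set.mem_univ _) (Set.mem_univ _)
  -- rewrite the bias as an integral of differences
  have hsplit : (∫ x, (q x * k x) • g x) - (∫ x, q x * k x) • g xstar
      = ∫ x, (q x * k x) • (g x - g xstar) := by
    rw [← integral_smul_const]
    rw [← integral_sub hInum (hIden.smul_const (g xstar))]
    simp [smul_sub]
  have hnormM : ‖∫ x, (q x * k x) • (g x - g xstar)‖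
      ≤ (κ * σ * Ck) * ∫ x, q x * k x := by
    have hb : Integrable (fun x => q x * k x * (κ * ‖x - xstar‖)) := by
      have := hJ1.const_mul κ
      apply this.congr
      filter_upwards with x
      ring
    have h1 : ‖∫ x, (q x * k x) • (g x - g xstar)‖
        ≤ ∫ x, q x * k x * (κ * ‖x - xstar‖) := by
      apply norm_integral_le_of_norm_le hb
      filter_upwards with x
      rw [norm_smul, Real.norm_eq_abs, abs_of_nonneg (hqknn x)]
      exact mul_le_mul_of_nonneg_left (hlip x) (hqknn x)
    have h2 : ∫ x, q x * k x * (κ * ‖x - xstar‖)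
        = κ * ∫ x, q x * k x * ‖x - xstar‖ := by
      have hfe : (fun x => q x * k x * (κ * ‖x - xstar‖))
          = fun x => κ • (q x * k x * ‖x - xstar‖) := by
        funext x
        rw [smul_eq_mul]
        ring
      rw [hfe, integral_smul, smul_eq_mul]
    have h3 : κ * ∫ x, q x * k x * ‖x - xstar‖ ≤ (κ * σ * Ck) * ∫ x, q x * k x := by
      rw [key1, key0]
      have hσd : (0:ℝ) < σ ^ d := pow_pos hσ d
      nlinarith [mul_le_mul_of_nonneg_left hmom
        (mul_nonneg (mul_nonneg hκ0 hσd.le) hσ.le)]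
    calc ‖∫ x, (q x * k x) • (g x - g xstar)‖
        ≤ ∫ x, q x * k x * (κ * ‖x - xstar‖) := h1
      _ = κ * ∫ x, q x * k x * ‖x - xstar‖ := h2
      _ ≤ (κ * σ * Ck) * ∫ x, q x * k x := h3
  -- put everything together
  have hrw : (∫ x, q x * k x)⁻¹ • (∫ x, (q x * k x) • g x) - g xstar
      = (∫ x, q x * k x)⁻¹ • (∫ x, (q x * k x) • (g x - g xstar)) := by
    rw [← hsplit, smul_sub, smul_smul, inv_mul_cancel₀ hDne, one_smul]
  have hmain : ‖(∫ x, q x * k x)⁻¹ • (∫ x, (q x * k x) • g x) - g xstar‖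
      ≤ κ * σ * Ck := by
    rw [hrw, norm_smul, Real.norm_eq_abs, abs_of_nonneg (inv_nonneg.2 hDpos.le)]
    calc (∫ x, q x * k x)⁻¹ * ‖∫ x, (q x * k x) • (g x - g xstar)‖
        ≤ (∫ x, q x * k x)⁻¹ * ((κ * σ * Ck) * ∫ x, q x * k x) :=
          mul_le_mul_of_nonneg_left hnormM (inv_nonneg.2 hDpos.le)
      _ = κ * σ * Ck := by
          rw [mul_comm, mul_assoc, mul_inv_cancel₀ hDne, mul_one]
  have hsd : (1:ℝ) ≤ Real.sqrt d := by
    rw [Real.one_le_sqrt]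
    exact_mod_cast hd
  have hfin : κ * σ * Ck ≤ Real.sqrt d * κ * σ * Ck := by
    nlinarith [mul_nonneg (mul_nonneg hκ0 hσ.le) hCk0]
  exact hmain.trans hfin
end

section
/- Let q be a probability measure on a measurable space X, let r : X → (0,∞) be measurable with ∫ r dq = 1, and let p := q.withDensity r. Let ψ : ℝ → ℝ be convex and differentiable, and let ψ*(y) := sup_{x∈ℝ} (x·y − ψ(x)) be its convex conjugate. Then for every measurable function d : X → ℝ such that d is p-integrable, ψ*∘d is q-integrable, and ψ∘r is q-integrable, one has ∫ d dp − ∫ ψ*(d) dq ≤ ∫ ψ(r) dq, and equality holds if and only if d(x) = ψ'(r(x)) for q-almost every x. -/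
open MeasureTheory

/-- Gradient inequality for a convex differentiable function. -/
lemma grad_ineq {ψ : ℝ → ℝ} (hψconv : ConvexOn ℝ Set.univ ψ)
    (hψdiff : Differentiable ℝ ψ) (x z : ℝ) :
    ψ x + deriv ψ x * (z - x) ≤ ψ z := by
  rcases lt_trichotomy x z with h | h | h
  · have := hψconv.deriv_le_slope (Set.mem_univ x) (Set.mem_univ z) h (hψdiff x)
    rw [slope_def_field] at this
    have hz : 0 < z - x := by linarith
    have := (le_div_iff₀ hz).mp this
    linarith
  · simp [h]
  · have := hψconv.slope_le_deriv (Set.mem_univ z) (Set.mem_univ x) h (hψdiff x)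
    rw [slope_def_field] at this
    have hz : 0 < x - z := by linarith
    have := (div_le_iff₀ hz).mp this
    linarith

lemma conj_at_deriv {ψ : ℝ → ℝ} (hψconv : ConvexOn ℝ Set.univ ψ)
    (hψdiff : Differentiable ℝ ψ) {ψstar : ℝ → ℝ}
    (hconj : ∀ y : ℝ, IsLUB (Set.range fun x : ℝ => x * y - ψ x) (ψstar y))
    (x : ℝ) : ψstar (deriv ψ x) = x * deriv ψ x - ψ x := by
  refine le_antisymm ?_ ((hconj _).1 ⟨x, rfl⟩)
  refine (hconj _).2 ?_
  rintro _ ⟨z, rfl⟩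
  have := grad_ineq hψconv hψdiff x z
  show z * deriv ψ x - ψ z ≤ x * deriv ψ x - ψ x
  linarith

lemma eq_deriv_of_conj_eq {ψ : ℝ → ℝ} (hψdiff : Differentiable ℝ ψ) {ψstar : ℝ → ℝ}
    (hconj : ∀ y : ℝ, IsLUB (Set.range fun x : ℝ => x * y - ψ x) (ψstar y))
    {x y : ℝ} (h : x * y - ψ x = ψstar y) : y = deriv ψ x := by
  have hmax : IsLocalMax (fun z : ℝ => z * y - ψ z) x := by
    apply Filter.Eventually.of_forall
    intro z
    have := (hconj y).1 ⟨z, rfl⟩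
    simpa [h] using this
  have hd : HasDerivAt (fun z : ℝ => z * y - ψ z) (y - deriv ψ x) x := by
    have h' := ((hasDerivAt_id' x).mul_const y).sub (hψdiff x).hasDerivAt
    rw [one_mul] at h'
    exact h'
  have := hmax.deriv_eq_zero
  rw [hd.deriv] at this
  linarith

/-- Variational lower bound of the f-divergence `D_ψ[p,q] = ∫ ψ(r) dq` and its
maximizer: for `p = q.withDensity r` and any suitable discriminator `d`,
`∫ d dp − ∫ ψ*(d) dq ≤ ∫ ψ(r) dq`, with equality iff `d = ψ' ∘ r` q-a.e. -/
theorem stmt5 {X : Type*} [MeasurableSpace X]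
    (q : Measure X) [IsProbabilityMeasure q]
    (r : X → ℝ) (hrm : Measurable r) (hrpos : ∀ x, 0 < r x)
    (hrint : ∫ x, r x ∂q = 1)
    (p : Measure X) (hp : p = q.withDensity fun x => ENNReal.ofReal (r x))
    (ψ : ℝ → ℝ) (hψconv : ConvexOn ℝ Set.univ ψ) (hψdiff : Differentiable ℝ ψ)
    (ψstar : ℝ → ℝ)
    (hconj : ∀ y : ℝ, IsLUB (Set.range fun x : ℝ => x * y - ψ x) (ψstar y))
    (d : X → ℝ) (hdm : Measurable d)
    (hdp : Integrable d p)
    (hψd : Integrable (fun x => ψstar (d x)) q)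
    (hψr : Integrable (fun x => ψ (r x)) q) :
    (∫ x, d x ∂p - ∫ x, ψstar (d x) ∂q ≤ ∫ x, ψ (r x) ∂q) ∧
    ((∫ x, d x ∂p - ∫ x, ψstar (d x) ∂q = ∫ x, ψ (r x) ∂q) ↔
      ∀ᵐ x ∂q, d x = deriv ψ (r x)) := by
  have hrnn : Measurable fun x => (r x).toNNReal := hrm.real_toNNReal
  have hofReal : (fun x => ENNReal.ofReal (r x))
      = fun x => ((fun x => (r x).toNNReal) x : ENNReal) := rfl
  -- ∫ d dp = ∫ r d dq
  have hint_eq : ∫ x, d x ∂p = ∫ x, r x * d x ∂q := by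
    rw [hp, hofReal, integral_withDensity_eq_integral_smul hrnn]
    apply integral_congr_ae
    filter_upwards with x
    simp [NNReal.smul_def, Real.coe_toNNReal _ (hrpos x).le]
  -- integrability of r * d
  have h1 : Integrable (fun x => r x * d x) q := by
    rw [hp, hofReal, integrable_withDensity_iff_integrable_smul hrnn] at hdp
    apply hdp.congr
    filter_upwards with x
    simp [NNReal.smul_def, Real.coe_toNNReal _ (hrpos x).le]
  -- pointwise Fenchel inequality
  have hpt : ∀ x, r x * d x - ψstar (d x) ≤ ψ (r x) := by
    intro x
    have h2 : r x * d x - ψ (r x) ≤ ψstar (d x) := (hconj (d x)).1 ⟨r x, rfl⟩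
    linarith
  have hg : Integrable (fun x => r x * d x - ψstar (d x)) q := h1.sub hψd
  have hle : ∫ x, (r x * d x - ψstar (d x)) ∂q ≤ ∫ x, ψ (r x) ∂q :=
    integral_mono hg hψr hpt
  have hsplit : ∫ x, (r x * d x - ψstar (d x)) ∂q
      = ∫ x, d x ∂p - ∫ x, ψstar (d x) ∂q := by
    rw [integral_sub h1 hψd, hint_eq]
  constructor
  · rw [← hsplit]; exact hle
  constructor
  · intro heq
    have hF : Integrable (fun x => ψ (r x) - (r x * d x - ψstar (d x))) q := hψr.sub hg
    have hzero : ∫ x, (ψ (r x) - (r x * d x - ψstar (d x))) ∂q = 0 := by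
      rw [integral_sub hψr hg, hsplit, heq, sub_self]
    have h0 : (fun x => ψ (r x) - (r x * d x - ψstar (d x))) =ᵐ[q] 0 := by
      rw [integral_eq_zero_iff_of_nonneg (fun x => by simpa using hpt x) hF] at hzero
      exact hzero
    filter_upwards [h0] with x hx
    have hx' : r x * d x - ψ (r x) = ψstar (d x) := by
      simp only [Pi.zero_apply] at hx; linarith
    exact eq_deriv_of_conj_eq hψdiff hconj hx'
  · intro hae
    rw [← hsplit]
    apply le_antisymm hle
    have : ∫ x, ψ (r x) ∂q = ∫ x, (r x * d x - ψstar (d x)) ∂q := by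
      apply integral_congr_ae
      filter_upwards [hae] with x hx
      have := conj_at_deriv hψconv hψdiff hconj (r x)
      rw [hx]; linarith
    exact this.le
end

section
/- Let ℓ : ℝ^k → ℝ be twice continuously differentiable on an open set containing the closed ball B := {θ : ‖θ − θ*‖ ≤ ρ} with ρ > 0, and suppose there is μ > 0 such that for all θ ∈ B and all v ∈ ℝ^k, ⟨v, ∇²ℓ(θ) v⟩ ≥ μ‖v‖². If θ₀ minimizes ℓ over B, then ‖θ₀ − θ*‖ ≤ ‖∇ℓ(θ*)‖/μ. -/
open scoped RealInnerProductSpace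

/-- Deterministic optimization bound at the core of the proof of Theorem 2:
a minimizer, over a ball centered at `θ*`, of a function that is `μ`-strongly convex
on that ball lies within `‖∇ℓ(θ*)‖/μ` of `θ*`. -/
theorem stmt6 {k : ℕ} (ℓ : EuclideanSpace ℝ (Fin k) → ℝ)
    (θstar : EuclideanSpace ℝ (Fin k)) (ρ : ℝ) (hρ : 0 < ρ)
    (U : Set (EuclideanSpace ℝ (Fin k))) (hU : IsOpen U)
    (hBU : Metric.closedBall θstar ρ ⊆ U)
    (hC2 : ContDiffOn ℝ 2 ℓ U)
    (μ : ℝ) (hμ : 0 < μ)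
    (hconv : ∀ θ ∈ Metric.closedBall θstar ρ, ∀ v : EuclideanSpace ℝ (Fin k),
      μ * ‖v‖ ^ 2 ≤ ⟪v, (fderiv ℝ (gradient ℓ) θ) v⟫)
    (θ₀ : EuclideanSpace ℝ (Fin k)) (hθ₀ : θ₀ ∈ Metric.closedBall θstar ρ)
    (hmin : ∀ θ ∈ Metric.closedBall θstar ρ, ℓ θ₀ ≤ ℓ θ) :
    ‖θ₀ - θstar‖ ≤ ‖gradient ℓ θstar‖ / μ := by
  set u : EuclideanSpace ℝ (Fin k) := θ₀ - θstar with hu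
  have hθ₀' : ‖u‖ ≤ ρ := by
    simpa [hu, dist_eq_norm] using hθ₀
  -- gradient is C¹ on U
  have hgrad1 : ContDiffOn ℝ 1 (gradient ℓ) U := by
    have h1 : ContDiffOn ℝ 1 (fderiv ℝ ℓ) U :=
      hC2.fderiv_of_isOpen hU (by norm_num)
    exact (InnerProductSpace.toDual ℝ (EuclideanSpace ℝ (Fin k))).symm.contDiff.comp_contDiffOn h1
  have hγmem : ∀ t ∈ Set.Icc (0:ℝ) 1, θstar + t • u ∈ Metric.closedBall θstar ρ := by
    intro t ht
    have : ‖θstar + t • u - θstar‖ = |t| * ‖u‖ := by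
      simp [norm_smul]
    rw [Metric.mem_closedBall, dist_eq_norm, this]
    have h1 : |t| ≤ 1 := abs_le.2 ⟨by linarith [ht.1], ht.2⟩
    calc |t| * ‖u‖ ≤ 1 * ‖u‖ := by
          exact mul_le_mul_of_nonneg_right h1 (norm_nonneg _)
      _ ≤ ρ := by simpa using hθ₀'
  have hgraddiff : ∀ x ∈ Metric.closedBall θstar ρ,
      HasFDerivAt (gradient ℓ) (fderiv ℝ (gradient ℓ) x) x := by
    intro x hx
    exact ((hgrad1.differentiableOn one_ne_zero).differentiableAt
      (hU.mem_nhds (hBU hx))).hasFDerivAt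
  set φ : ℝ → ℝ := fun t => ⟪u, gradient ℓ (θstar + t • u)⟫ with hφdef
  have hφ : ∀ t ∈ Set.Icc (0:ℝ) 1,
      HasDerivAt φ ⟪u, (fderiv ℝ (gradient ℓ) (θstar + t • u)) u⟫ t := by
    intro t ht
    have hγ : HasDerivAt (fun s : ℝ => θstar + s • u) u t := by
      simpa using ((hasDerivAt_id t).smul_const u).const_add θstar
    have hcomp := (hgraddiff _ (hγmem t ht)).comp_hasDerivAt t hγ
    have := (hasDerivAt_const t u).inner ℝ hcomp
    simpa [hφdef] using this
  -- MVT lower bound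
  have hmvt : μ * ‖u‖ ^ 2 * (1 - 0) ≤ φ 1 - φ 0 := by
    have hcont : ContinuousOn φ (Set.Icc 0 1) := fun t ht =>
      (hφ t ht).continuousAt.continuousWithinAt
    have hdiff : DifferentiableOn ℝ φ (interior (Set.Icc (0:ℝ) 1)) := by
      intro t ht
      rw [interior_Icc] at ht
      exact (hφ t (Set.Ioo_subset_Icc_self ht)).differentiableAt.differentiableWithinAt
    have hge : ∀ t ∈ interior (Set.Icc (0:ℝ) 1), μ * ‖u‖ ^ 2 ≤ deriv φ t := by
      intro t ht
      rw [interior_Icc] at ht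
      rw [(hφ t (Set.Ioo_subset_Icc_self ht)).deriv]
      exact hconv _ (hγmem t (Set.Ioo_subset_Icc_self ht)) u
    exact (convex_Icc (0:ℝ) 1).mul_sub_le_image_sub_of_le_deriv hcont hdiff hge 0
      (Set.left_mem_Icc.2 zero_le_one) 1 (Set.right_mem_Icc.2 zero_le_one) zero_le_one
  -- first-order optimality: φ 1 ≤ 0
  have hφ1 : φ 1 ≤ 0 := by
    have hγ1 : θstar + (1:ℝ) • u = θ₀ := by
      rw [one_smul, hu]; abel
    set ψ : ℝ → ℝ := fun s => ℓ (θ₀ + s • (θstar - θ₀)) with hψdef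
    have hdℓ : DifferentiableAt ℝ ℓ θ₀ :=
      (hC2.differentiableOn (by norm_num)).differentiableAt (hU.mem_nhds (hBU hθ₀))
    have hψd : HasDerivAt ψ ⟪gradient ℓ θ₀, θstar - θ₀⟫ 0 := by
      have hγ : HasDerivAt (fun s : ℝ => θ₀ + s • (θstar - θ₀)) (θstar - θ₀) 0 := by
        simpa using ((hasDerivAt_id (0:ℝ)).smul_const (θstar - θ₀)).const_add θ₀
      have hF : HasFDerivAt ℓ
          (InnerProductSpace.toDual ℝ _ (gradient ℓ θ₀)) θ₀ :=
        hdℓ.hasGradientAt.hasFDerivAt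
      have h0pt : θ₀ + (0:ℝ) • (θstar - θ₀) = θ₀ := by simp
      have hF' : HasFDerivAt ℓ
          (InnerProductSpace.toDual ℝ _ (gradient ℓ θ₀)) (θ₀ + (0:ℝ) • (θstar - θ₀)) := by
        rw [h0pt]; exact hF
      have := hF'.comp_hasDerivAt 0 hγ
      simpa [ψ, InnerProductSpace.toDual_apply_apply, Function.comp_def] using this
    have hψmin : ∀ s ∈ Set.Ioc (0:ℝ) 1, ψ 0 ≤ ψ s := by
      intro s hs
      have hmem : θ₀ + s • (θstar - θ₀) ∈ Metric.closedBall θstar ρ := by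
        have heq : θ₀ + s • (θstar - θ₀) - θstar = (1 - s) • u := by
          rw [hu]; module
        rw [Metric.mem_closedBall, dist_eq_norm, heq, norm_smul]
        have h1 : |1 - s| ≤ 1 := abs_le.2 ⟨by linarith [hs.2], by linarith [hs.1]⟩
        calc |1 - s| * ‖u‖ ≤ 1 * ‖u‖ :=
              mul_le_mul_of_nonneg_right h1 (norm_nonneg _)
          _ ≤ ρ := by simpa using hθ₀'
      simpa [ψ] using hmin _ hmem
    have hslope : ∀ s ∈ Set.Ioc (0:ℝ) 1, 0 ≤ slope ψ 0 s := by
      intro s hs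
      rw [slope_def_field]
      have := hψmin s hs
      have hs0 : 0 < s := hs.1
      apply div_nonneg (by linarith) (by simpa using hs0.le)
    have hd : HasDerivWithinAt ψ ⟪gradient ℓ θ₀, θstar - θ₀⟫ (Set.Ioc 0 1) 0 :=
      hψd.hasDerivWithinAt
    have htend := hasDerivWithinAt_iff_tendsto_slope.1 hd
    have hne : (Set.Ioc (0:ℝ) 1 \ {0}) = Set.Ioc 0 1 := by
      ext x; simp only [Set.mem_diff, Set.mem_singleton_iff, Set.mem_Ioc]
      constructor
      · exact fun h => h.1
      · intro h; exact ⟨h, ne_of_gt h.1⟩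
    rw [hne] at htend
    have hNeBot : (nhdsWithin (0:ℝ) (Set.Ioc 0 1)).NeBot :=
      (left_nhdsWithin_Ioo_neBot (by norm_num : (0:ℝ) < 1)).mono
        (nhdsWithin_mono _ Set.Ioo_subset_Ioc_self)
    have hge : 0 ≤ ⟪gradient ℓ θ₀, θstar - θ₀⟫ := by
      have : ∀ᶠ s in nhdsWithin (0:ℝ) (Set.Ioc 0 1), 0 ≤ slope ψ 0 s :=
        eventually_nhdsWithin_of_forall hslope
      exact ge_of_tendsto htend this
    have : ⟪gradient ℓ θ₀, u⟫ ≤ 0 := by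
      have h2 : θstar - θ₀ = -u := by rw [hu]; abel
      rw [h2, inner_neg_right] at hge
      linarith
    rw [hφdef]
    simp only [hγ1]
    rw [real_inner_comm]
    exact this
  -- conclude
  have hφ0 : φ 0 = ⟪u, gradient ℓ θstar⟫ := by simp [hφdef]
  have key : μ * ‖u‖ ^ 2 ≤ ‖u‖ * ‖gradient ℓ θstar‖ := by
    have h1 : μ * ‖u‖ ^ 2 ≤ - φ 0 := by
      have := hmvt
      linarith
    have h2 : -φ 0 = ⟪u, -gradient ℓ θstar⟫ := by
      rw [hφ0, inner_neg_right]
    have h3 : ⟪u, -gradient ℓ θstar⟫ ≤ ‖u‖ * ‖-gradient ℓ θstar‖ :=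
      real_inner_le_norm _ _
    rw [norm_neg] at h3
    linarith
  rcases eq_or_lt_of_le (norm_nonneg u) with h0 | h0
  · have hz : ‖θ₀ - θstar‖ = 0 := by rw [← hu, ← h0]
    rw [hz]
    positivity
  · rw [le_div_iff₀ hμ]
    have : μ * ‖u‖ * ‖u‖ ≤ ‖gradient ℓ θstar‖ * ‖u‖ := by
      calc μ * ‖u‖ * ‖u‖ = μ * ‖u‖ ^ 2 := by ring
        _ ≤ ‖u‖ * ‖gradient ℓ θstar‖ := key
        _ = ‖gradient ℓ θstar‖ * ‖u‖ := by ring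
    have := le_of_mul_le_mul_right this h0
    rw [hu] at this
    linarith
end

section
/- Let q be a probability density on ℝ^d, r : ℝ^d → (0,∞) measurable with ∫ r q = 1, and p := r·q. Let F : ℝ^d → ℝ be twice continuously differentiable with sup_x ‖∇²F(x)‖_op ≤ κ < ∞. Fix x⋆ ∈ ℝ^d, σ > 0, k_σ(x) := exp(−‖x−x⋆‖²/(2σ²)), and set w* := ∇F(x⋆), b* := F(x⋆) − ⟨w*, x⋆⟩, L(x) := ⟨w*, x⟩ + b*, and x̃ := (x,1) ∈ ℝ^{d+1}. Let g : ℝ → ℝ be differentiable with g(F(x)) = r(x) for all x, and suppose there is C > 0 such that for all x ∈ ℝ^d and all a ∈ [0,1], |g'(a·F(x) + (1−a)·L(x))| ≤ C. Assume all displayed integrals are finite. Then ‖ ∫ q(x) k_σ(x) g(L(x)) x̃ dx − ∫ p(x) k_σ(x) x̃ dx ‖ ≤ (κ C / 2) ∫ q(x) k_σ(x) ‖x − x⋆‖² ‖x̃‖ dx. -/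
open MeasureTheory
open scoped RealInnerProductSpace

private noncomputable def dualSymmCLM (E : Type*) [NormedAddCommGroup E]
    [InnerProductSpace ℝ E] [CompleteSpace E] : (E →L[ℝ] ℝ) →L[ℝ] E :=
  LinearMap.mkContinuous
    { toFun := fun φ => (InnerProductSpace.toDual ℝ E).symm φ
      map_add' := fun a b => map_add _ a b
      map_smul' := fun r φ => by
        simp }
    1 (fun φ => by simp)

private lemma taylor_aux {d : ℕ} (F : EuclideanSpace ℝ (Fin d) → ℝ) (hF : ContDiff ℝ 2 F)
    (κ : ℝ) (hκ : ∀ x, ‖fderiv ℝ (gradient F) x‖ ≤ κ)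
    (xstar x : EuclideanSpace ℝ (Fin d)) :
    |F x - F xstar - ⟪gradient F xstar, x - xstar⟫| ≤ κ / 2 * ‖x - xstar‖ ^ 2 := by
  set v := x - xstar with hv
  have hFd : Differentiable ℝ F := hF.differentiable two_ne_zero
  have hfd1 : ContDiff ℝ 1 (fderiv ℝ F) := hF.fderiv_right (le_refl 2)
  have hgd : Differentiable ℝ (gradient F) := by
    have heq : gradient F = fun y =>
        dualSymmCLM (EuclideanSpace ℝ (Fin d)) (fderiv ℝ F y) := rfl
    rw [heq]
    exact ((dualSymmCLM (EuclideanSpace ℝ (Fin d))).differentiable).comp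
      (hfd1.differentiable one_ne_zero)
  have hlip : ∀ y, ‖gradient F y - gradient F xstar‖ ≤ κ * ‖y - xstar‖ := fun y =>
    convex_univ.norm_image_sub_le_of_norm_fderiv_le (fun z _ => (hgd z))
      (fun z _ => hκ z) (Set.mem_univ xstar) (Set.mem_univ y)
  have hfderiv_inner : ∀ y (u : EuclideanSpace ℝ (Fin d)),
      fderiv ℝ F y u = ⟪gradient F y, u⟫ := by
    intro y u
    exact (InnerProductSpace.toDual_symm_apply).symm
  set γ : ℝ → EuclideanSpace ℝ (Fin d) := fun t => xstar + t • v with hγdef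
  have hγ : ∀ t : ℝ, HasDerivAt γ v t := by
    intro t
    simpa [hγdef] using ((hasDerivAt_id t).smul_const v).const_add xstar
  set c : ℝ := ⟪gradient F xstar, v⟫ with hc
  set f : ℝ → ℝ := fun t => F (γ t) - F xstar - t * c with hfdef
  have hf' : ∀ t : ℝ, HasDerivAt f (⟪gradient F (γ t) - gradient F xstar, v⟫) t := by
    intro t
    have h1 : HasDerivAt (fun t => F (γ t)) (fderiv ℝ F (γ t) v) t :=
      (hFd (γ t)).hasFDerivAt.comp_hasDerivAt t (hγ t)
    have h2 : HasDerivAt f (fderiv ℝ F (γ t) v - c) t := by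
      exact (h1.sub_const (F xstar)).sub (hasDerivAt_mul_const c)
    have h3 : fderiv ℝ F (γ t) v - c = ⟪gradient F (γ t) - gradient F xstar, v⟫ := by
      rw [hfderiv_inner, inner_sub_left]
    rwa [h3] at h2
  have hB : ∀ t : ℝ, HasDerivAt (fun t : ℝ => κ / 2 * ‖v‖ ^ 2 * t ^ 2) (κ * ‖v‖ ^ 2 * t) t := by
    intro t
    have h := (hasDerivAt_pow 2 t).const_mul (κ / 2 * ‖v‖ ^ 2)
    exact h.congr_deriv (by ring)
  have hfc : Continuous f := by
    have hγc : Continuous γ := by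
      exact continuous_const.add (continuous_id.smul continuous_const)
    exact ((hFd.continuous.comp hγc).sub continuous_const).sub
      (continuous_id.mul continuous_const)
  have key : ∀ u ∈ Set.Icc (0:ℝ) 1, ‖f u‖ ≤ κ / 2 * ‖v‖ ^ 2 * u ^ 2 := by
    intro u hu
    refine image_norm_le_of_norm_deriv_right_le_deriv_boundary
      (f' := fun t => ⟪gradient F (γ t) - gradient F xstar, v⟫)
      hfc.continuousOn (fun t _ => (hf' t).hasDerivWithinAt) ?_ hB ?_ hu
    · simp [hfdef, hγdef]
    · intro t ht
      have h1 : ‖(⟪gradient F (γ t) - gradient F xstar, v⟫ : ℝ)‖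
          ≤ ‖gradient F (γ t) - gradient F xstar‖ * ‖v‖ := by
        rw [Real.norm_eq_abs]; exact abs_real_inner_le_norm _ _
      have h2 : ‖gradient F (γ t) - gradient F xstar‖ ≤ κ * ‖γ t - xstar‖ := hlip (γ t)
      have h3 : ‖γ t - xstar‖ = t * ‖v‖ := by
        have : γ t - xstar = t • v := by simp [hγdef]
        rw [this, norm_smul, Real.norm_eq_abs, abs_of_nonneg ht.1]
      calc ‖(⟪gradient F (γ t) - gradient F xstar, v⟫ : ℝ)‖
          ≤ ‖gradient F (γ t) - gradient F xstar‖ * ‖v‖ := h1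
        _ ≤ κ * ‖γ t - xstar‖ * ‖v‖ := by
            apply mul_le_mul_of_nonneg_right h2 (norm_nonneg _)
        _ = κ * ‖v‖ ^ 2 * t := by rw [h3]; ring
  have hkey := key 1 (by norm_num)
  have hγ1 : γ 1 = x := by simp [hγdef, hv]
  rw [Real.norm_eq_abs] at hkey
  simpa [hfdef, hγ1, hc] using hkey

/-- Key Lemma bounding `‖E∇ℓ(θ*)‖` in the proof of Theorem 2: the population gradient of
the localized variational objective, evaluated at the parameters of the exact first-order
Taylor expansion of `F` at `x⋆`, is small. -/
theorem stmt7 {d : ℕ}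
    (q : EuclideanSpace ℝ (Fin d) → ℝ) (hq0 : ∀ x, 0 ≤ q x) (hq1 : ∫ x, q x = 1)
    (r : EuclideanSpace ℝ (Fin d) → ℝ) (hrm : Measurable r) (hrpos : ∀ x, 0 < r x)
    (hr1 : ∫ x, r x * q x = 1)
    (p : EuclideanSpace ℝ (Fin d) → ℝ) (hp : ∀ x, p x = r x * q x)
    (F : EuclideanSpace ℝ (Fin d) → ℝ) (hF : ContDiff ℝ 2 F)
    (κ : ℝ) (hκ : ∀ x, ‖fderiv ℝ (gradient F) x‖ ≤ κ)
    (xstar : EuclideanSpace ℝ (Fin d)) (σ : ℝ) (hσ : 0 < σ)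
    (k : EuclideanSpace ℝ (Fin d) → ℝ)
    (hk : ∀ x, k x = Real.exp (-‖x - xstar‖ ^ 2 / (2 * σ ^ 2)))
    (wstar : EuclideanSpace ℝ (Fin d)) (hw : wstar = gradient F xstar)
    (bstar : ℝ) (hb : bstar = F xstar - ⟪wstar, xstar⟫)
    (L : EuclideanSpace ℝ (Fin d) → ℝ) (hL : ∀ x, L x = ⟪wstar, x⟫ + bstar)
    (tilde : EuclideanSpace ℝ (Fin d) → WithLp 2 (EuclideanSpace ℝ (Fin d) × ℝ))
    (htilde : ∀ x, tilde x = (WithLp.equiv 2 (EuclideanSpace ℝ (Fin d) × ℝ)).symm (x, 1))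
    (g : ℝ → ℝ) (hg : Differentiable ℝ g) (hgF : ∀ x, g (F x) = r x)
    (C : ℝ) (hC : 0 < C)
    (hgC : ∀ x, ∀ a ∈ Set.Icc (0 : ℝ) 1, |deriv g (a * F x + (1 - a) * L x)| ≤ C)
    (hI1 : Integrable fun x => (q x * k x * g (L x)) • tilde x)
    (hI2 : Integrable fun x => (p x * k x) • tilde x)
    (hI3 : Integrable fun x => q x * k x * ‖x - xstar‖ ^ 2 * ‖tilde x‖) :
    ‖(∫ x, (q x * k x * g (L x)) • tilde x) - ∫ x, (p x * k x) • tilde x‖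
      ≤ κ * C / 2 * ∫ x, q x * k x * ‖x - xstar‖ ^ 2 * ‖tilde x‖ := by
  have hκ0 : 0 ≤ κ := le_trans (norm_nonneg _) (hκ xstar)
  have hk0 : ∀ x, 0 ≤ k x := fun x => by rw [hk]; positivity
  have hgL : ∀ x, |g (L x) - g (F x)| ≤ C * |L x - F x| := by
    intro x
    have hmvt := Convex.norm_image_sub_le_of_norm_deriv_le (𝕜 := ℝ)
      (f := g) (s := segment ℝ (F x) (L x)) (C := C)
      (fun y _ => hg y)
      (by
        intro y hy
        rw [segment_eq_image] at hy
        obtain ⟨t, ht, rfl⟩ := hy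
        have h := hgC x (1 - t) ⟨by linarith [ht.2], by linarith [ht.1]⟩
        rw [sub_sub_cancel] at h
        simpa [Real.norm_eq_abs, smul_eq_mul] using h)
      (convex_segment _ _) (left_mem_segment ℝ _ _) (right_mem_segment ℝ _ _)
    simpa [Real.norm_eq_abs] using hmvt
  have htay : ∀ x, |L x - F x| ≤ κ / 2 * ‖x - xstar‖ ^ 2 := by
    intro x
    have h := taylor_aux F hF κ hκ xstar x
    have heq : L x - F x = -(F x - F xstar - ⟪gradient F xstar, x - xstar⟫) := by
      rw [hL, hb, hw, inner_sub_right]; ring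
    rw [heq, abs_neg]; exact h
  have hpt : ∀ x, ‖(q x * k x * g (L x)) • tilde x - (p x * k x) • tilde x‖
      ≤ κ * C / 2 * (q x * k x * ‖x - xstar‖ ^ 2 * ‖tilde x‖) := by
    intro x
    have hpk : p x * k x = q x * k x * g (F x) := by rw [hp, hgF]; ring
    have hcomb : q x * k x * g (L x) - q x * k x * g (F x)
        = q x * k x * (g (L x) - g (F x)) := by ring
    rw [hpk, ← sub_smul, norm_smul, hcomb, Real.norm_eq_abs, abs_mul,
      abs_of_nonneg (mul_nonneg (hq0 x) (hk0 x))]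
    have h1 : |g (L x) - g (F x)| ≤ C * (κ / 2 * ‖x - xstar‖ ^ 2) :=
      (hgL x).trans (mul_le_mul_of_nonneg_left (htay x) hC.le)
    calc q x * k x * |g (L x) - g (F x)| * ‖tilde x‖
        ≤ q x * k x * (C * (κ / 2 * ‖x - xstar‖ ^ 2)) * ‖tilde x‖ := by
          exact mul_le_mul_of_nonneg_right
            (mul_le_mul_of_nonneg_left h1 (mul_nonneg (hq0 x) (hk0 x))) (norm_nonneg _)
      _ = κ * C / 2 * (q x * k x * ‖x - xstar‖ ^ 2 * ‖tilde x‖) := by ring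
  calc ‖(∫ x, (q x * k x * g (L x)) • tilde x) - ∫ x, (p x * k x) • tilde x‖
      = ‖∫ x, ((q x * k x * g (L x)) • tilde x - (p x * k x) • tilde x)‖ := by
        rw [integral_sub hI1 hI2]
    _ ≤ ∫ x, ‖(q x * k x * g (L x)) • tilde x - (p x * k x) • tilde x‖ :=
        norm_integral_le_integral_norm _
    _ ≤ ∫ x, κ * C / 2 * (q x * k x * ‖x - xstar‖ ^ 2 * ‖tilde x‖) :=
        integral_mono (hI1.sub hI2).norm (hI3.const_mul _) hpt
    _ = κ * C / 2 * ∫ x, q x * k x * ‖x - xstar‖ ^ 2 * ‖tilde x‖ :=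
        integral_const_mul _ _
end

section
/- Let q be a probability density on ℝ^d, r : ℝ^d → (0,∞) measurable with ∫ r q = 1, and p := r·q. Let F : ℝ^d → ℝ be twice continuously differentiable with sup_x ‖∇²F(x)‖_op ≤ κ, let ψ_con : ℝ → ℝ be twice continuously differentiable with ψ'_con(F(x)) = r(x) for all x, fix x⋆ ∈ ℝ^d and σ > 0, and set k_σ(x) := exp(−‖x−x⋆‖²/(2σ²)), x̃ := (x,1), w* := ∇F(x⋆), b* := F(x⋆) − ⟨w*, x⋆⟩. Assume: (i) constants W, B > 0 with ‖w*‖ ≤ W and |b*| ≤ B; (ii) a constant C > 0 with |ψ''_con(a·F(x) + (1−a)(⟨w*,x⟩+b*))| ≤ C for all x and a ∈ [0,1]; (iii) ∫ q(x⋆+σy) e^{−‖y‖²/2} ‖y‖² ‖(x⋆+σy, 1)‖ dy ≤ C_k; (iv) a constant Λ > 0 such that for all (w,b) with ‖w‖ ≤ 2W and |b| ≤ 2B, the smallest eigenvalue of ∫ q(x) k_σ(x) ψ''_con(⟨w,x⟩+b) x̃ x̃ᵀ dx is at least σ^d Λ. Define ℓ(w,b) := −∫ p(x) k_σ(x) (⟨w,x⟩+b)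 dx + ∫ q(x) k_σ(x) ψ_con(⟨w,x⟩+b) dx, and assume ℓ is twice continuously differentiable with gradient and Hessian obtained by differentiating under the integral sign. If (w₀, b₀) minimizes ℓ over the closed ball {(w,b) : ‖(w,b) − (w*,b*)‖ ≤ min(W,B)}, then ‖w₀ − ∇F(x⋆)‖ ≤ κ C C_k σ² / Λ. -/
open MeasureTheory
open scoped RealInnerProductSpace

lemma aux_le_of_sq_le_sq {a b : ℝ} (ha : 0 ≤ a) (hb : 0 ≤ b) (h : a ^ 2 ≤ b ^ 2) : a ≤ b := by
  nlinarith

lemma aux_exp_bound (σ : ℝ) (hσ : 0 < σ) (t c : ℝ) (ht : 0 ≤ t) (hc : 0 ≤ c) :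
    Real.exp (-t ^ 2 / (2 * σ ^ 2)) * (t ^ 2 * (t + c))
      ≤ 15 * σ ^ 3 + c * (2 * σ ^ 2) := by
  set u : ℝ := t ^ 2 / (2 * σ ^ 2) with hu
  have hσ2 : 0 < 2 * σ ^ 2 := by positivity
  have hu0 : 0 ≤ u := by positivity
  have ht2 : t ^ 2 = 2 * σ ^ 2 * u := by rw [hu]; field_simp
  have hE : Real.exp (-t ^ 2 / (2 * σ ^ 2)) = (Real.exp u)⁻¹ := by
    rw [← Real.exp_neg]; congr 1; rw [hu]; ring
  set E : ℝ := Real.exp u with hEdef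
  have hEpos : 0 < E := Real.exp_pos u
  have hE1 : 1 ≤ E := Real.one_le_exp hu0
  have huE : u ≤ E := le_trans (by linarith) (Real.add_one_le_exp u)
  have hu3 : u ^ 3 ≤ 27 * E := by
    have h1 : u / 3 ≤ Real.exp (u / 3) :=
      le_trans (by linarith) (Real.add_one_le_exp (u / 3))
    have h2 : (u / 3) ^ 3 ≤ Real.exp (u / 3) ^ 3 :=
      pow_le_pow_left₀ (by positivity) h1 3
    have h3 : Real.exp (u / 3) ^ 3 = E := by
      rw [← Real.exp_nat_mul, hEdef]; congr 1; push_cast; ring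
    rw [h3] at h2
    nlinarith
  rw [hE]
  have hkey2 : E⁻¹ * t ^ 2 ≤ 2 * σ ^ 2 := by
    rw [ht2]
    rw [inv_mul_le_iff₀ hEpos]
    nlinarith
  have hkey3 : E⁻¹ * t ^ 3 ≤ 15 * σ ^ 3 := by
    have hsq : (E⁻¹ * t ^ 3) ^ 2 ≤ (15 * σ ^ 3) ^ 2 := by
      have hEinv1 : E⁻¹ ≤ 1 := by
        rw [inv_le_one_iff₀]; right; exact hE1
      have h6 : t ^ 6 = 8 * σ ^ 6 * u ^ 3 := by
        have : t ^ 6 = (t ^ 2) ^ 3 := by ring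
        rw [this, ht2]; ring
      have : (E⁻¹ * t ^ 3) ^ 2 = E⁻¹ ^ 2 * t ^ 6 := by ring
      rw [this, h6]
      have hEinv : 0 < E⁻¹ := by positivity
      calc E⁻¹ ^ 2 * (8 * σ ^ 6 * u ^ 3) ≤ E⁻¹ ^ 2 * (8 * σ ^ 6 * (27 * E)) := by
            have : (0:ℝ) ≤ E⁻¹ ^ 2 * (8 * σ ^ 6) := by positivity
            nlinarith [sq_nonneg E⁻¹, pow_pos hσ 6]
        _ = 216 * σ ^ 6 * (E⁻¹ ^ 2 * E) := by ring
        _ ≤ 225 * σ ^ 6 * 1 := by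
            have h1 : E⁻¹ ^ 2 * E = E⁻¹ := by field_simp
            rw [h1]
            nlinarith [pow_pos hσ 6]
        _ = (15 * σ ^ 3) ^ 2 := by ring
    exact aux_le_of_sq_le_sq (by positivity) (by positivity) hsq
  calc (Real.exp u)⁻¹ * (t ^ 2 * (t + c))
      = E⁻¹ * t ^ 3 + c * (E⁻¹ * t ^ 2) := by rw [← hEdef]; ring
    _ ≤ 15 * σ ^ 3 + c * (2 * σ ^ 2) := by
        have := mul_le_mul_of_nonneg_left hkey2 hc
        linarith

set_option maxHeartbeats 2000000 in
set_option synthInstance.maxHeartbeats 200000 in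
/-- Population (infinite-sample) version of Theorem 2: the slope of the locally fitted
linear model obtained from the localized variational objective estimates the velocity
field `∇F(x⋆) = ∇(h∘r)(x⋆)` with bias at most `κ C C_k σ² / Λ`. -/
theorem stmt8 {d : ℕ}
    (q : EuclideanSpace ℝ (Fin d) → ℝ) (hq0 : ∀ x, 0 ≤ q x) (hq1 : ∫ x, q x = 1)
    (r : EuclideanSpace ℝ (Fin d) → ℝ) (hrm : Measurable r) (hrpos : ∀ x, 0 < r x)
    (hr1 : ∫ x, r x * q x = 1)
    (p : EuclideanSpace ℝ (Fin d) → ℝ) (hp : ∀ x, p x = r x * q x)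
    (F : EuclideanSpace ℝ (Fin d) → ℝ) (hF : ContDiff ℝ 2 F)
    (κ : ℝ) (hκ : ∀ x, ‖fderiv ℝ (gradient F) x‖ ≤ κ)
    (ψcon : ℝ → ℝ) (hψcon : ContDiff ℝ 2 ψcon)
    (hψconF : ∀ x, deriv ψcon (F x) = r x)
    (xstar : EuclideanSpace ℝ (Fin d)) (σ : ℝ) (hσ : 0 < σ)
    (k : EuclideanSpace ℝ (Fin d) → ℝ)
    (hk : ∀ x, k x = Real.exp (-‖x - xstar‖ ^ 2 / (2 * σ ^ 2)))
    (tilde : EuclideanSpace ℝ (Fin d) → WithLp 2 (EuclideanSpace ℝ (Fin d) × ℝ))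
    (htilde : ∀ x, tilde x = (WithLp.equiv 2 (EuclideanSpace ℝ (Fin d) × ℝ)).symm (x, 1))
    (wstar : EuclideanSpace ℝ (Fin d)) (hw : wstar = gradient F xstar)
    (bstar : ℝ) (hb : bstar = F xstar - ⟪wstar, xstar⟫)
    -- (i)
    (W B : ℝ) (hWpos : 0 < W) (hBpos : 0 < B)
    (hwstar : ‖wstar‖ ≤ W) (hbstar : |bstar| ≤ B)
    -- (ii)
    (C : ℝ) (hCpos : 0 < C)
    (hψcon'' : ∀ x, ∀ a ∈ Set.Icc (0 : ℝ) 1,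
      |deriv (deriv ψcon) (a * F x + (1 - a) * (⟪wstar, x⟫ + bstar))| ≤ C)
    -- (iii)
    (Ck : ℝ)
    (hmom : (∫ y : EuclideanSpace ℝ (Fin d),
        q (xstar + σ • y) * Real.exp (-‖y‖ ^ 2 / 2) * ‖y‖ ^ 2 * ‖tilde (xstar + σ • y)‖)
      ≤ Ck)
    -- (iv) eigenvalue lower bound on the Hessian matrix, via its quadratic form
    (Λ : ℝ) (hΛ : 0 < Λ)
    (heig : ∀ (w : EuclideanSpace ℝ (Fin d)) (b : ℝ), ‖w‖ ≤ 2 * W → |b| ≤ 2 * B →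
      ∀ v : WithLp 2 (EuclideanSpace ℝ (Fin d) × ℝ),
        σ ^ d * Λ * ‖v‖ ^ 2
          ≤ ∫ x, q x * k x * deriv (deriv ψcon) (⟪w, x⟫ + b) * ⟪v, tilde x⟫ ^ 2)
    -- the objective,
    (ℓ : WithLp 2 (EuclideanSpace ℝ (Fin d) × ℝ) → ℝ)
    (hℓ : ∀ (w : EuclideanSpace ℝ (Fin d)) (b : ℝ),
      ℓ ((WithLp.equiv 2 (EuclideanSpace ℝ (Fin d) × ℝ)).symm (w, b))
        = -(∫ x, p x * k x * (⟪w, x⟫ + b)) + ∫ x, q x * k x * ψcon (⟪w, x⟫ + b))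
    -- with all displayed integrals finite,
    (hIobj : ∀ (w : EuclideanSpace ℝ (Fin d)) (b : ℝ),
      (Integrable fun x => p x * k x * (⟪w, x⟫ + b)) ∧
      (Integrable fun x => q x * k x * ψcon (⟪w, x⟫ + b)))
    (hIgrad : ∀ (w : EuclideanSpace ℝ (Fin d)) (b : ℝ),
      (Integrable fun x => (p x * k x) • tilde x) ∧
      (Integrable fun x => (q x * k x * deriv ψcon (⟪w, x⟫ + b)) • tilde x))
    (hIhess : ∀ (w : EuclideanSpace ℝ (Fin d)) (b : ℝ),
      ∀ v : WithLp 2 (EuclideanSpace ℝ (Fin d) × ℝ),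
      Integrable fun x => q x * k x * deriv (deriv ψcon) (⟪w, x⟫ + b) * ⟪v, tilde x⟫ ^ 2)
    -- twice continuously differentiable, with gradient and Hessian obtained by
    -- differentiating under the integral sign:
    (hℓC2 : ContDiff ℝ 2 ℓ)
    (hgrad : ∀ (w : EuclideanSpace ℝ (Fin d)) (b : ℝ),
      gradient ℓ ((WithLp.equiv 2 (EuclideanSpace ℝ (Fin d) × ℝ)).symm (w, b))
        = (∫ x, (q x * k x * deriv ψcon (⟪w, x⟫ + b)) • tilde x)
          - ∫ x, (p x * k x) • tilde x)
    (hhess : ∀ (w : EuclideanSpace ℝ (Fin d)) (b : ℝ),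
      ∀ v : WithLp 2 (EuclideanSpace ℝ (Fin d) × ℝ),
      ⟪v, fderiv ℝ (gradient ℓ)
          ((WithLp.equiv 2 (EuclideanSpace ℝ (Fin d) × ℝ)).symm (w, b)) v⟫
        = ∫ x, q x * k x * deriv (deriv ψcon) (⟪w, x⟫ + b) * ⟪v, tilde x⟫ ^ 2)
    -- the minimizer over the closed ball:
    (θ₀ : WithLp 2 (EuclideanSpace ℝ (Fin d) × ℝ))
    (hθ₀mem : θ₀ ∈ Metric.closedBall
      ((WithLp.equiv 2 (EuclideanSpace ℝ (Fin d) × ℝ)).symm (wstar, bstar)) (min W B))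
    (hθ₀min : ∀ θ ∈ Metric.closedBall
      ((WithLp.equiv 2 (EuclideanSpace ℝ (Fin d) × ℝ)).symm (wstar, bstar)) (min W B),
      ℓ θ₀ ≤ ℓ θ) :
    ‖((WithLp.equiv 2 (EuclideanSpace ℝ (Fin d) × ℝ)) θ₀).1 - gradient F xstar‖
      ≤ κ * C * Ck * σ ^ 2 / Λ := by
  have hκ0 : 0 ≤ κ := le_trans (norm_nonneg _) (hκ xstar)
  set θs : WithLp 2 (EuclideanSpace ℝ (Fin d) × ℝ) :=
    (WithLp.equiv 2 (EuclideanSpace ℝ (Fin d) × ℝ)).symm (wstar, bstar) with hθs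
  set u : WithLp 2 (EuclideanSpace ℝ (Fin d) × ℝ) := θ₀ - θs with hu
  -- basic nonnegativity facts
  have hCk0 : 0 ≤ Ck := by
    refine le_trans (integral_nonneg fun y => ?_) hmom
    have := hq0 (xstar + σ • y)
    positivity
  have hk0 : ∀ x, 0 ≤ k x := fun x => by rw [hk]; positivity
  have hqk0 : ∀ x, 0 ≤ q x * k x := fun x => mul_nonneg (hq0 x) (hk0 x)
  -- differentiability facts
  have hFdiff : Differentiable ℝ F := hF.differentiable (by norm_num)
  have hgradF_cd : ContDiff ℝ 1 (gradient F) := by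
    have h1 : ContDiff ℝ 1 (fderiv ℝ F) := hF.fderiv_right le_rfl
    have h2 : gradient F = fun y =>
        (InnerProductSpace.toDual ℝ (EuclideanSpace ℝ (Fin d))).symm (fderiv ℝ F y) := rfl
    rw [h2]
    exact (InnerProductSpace.toDual ℝ _).symm.contDiff.comp h1
  have hgradF_diff : Differentiable ℝ (gradient F) := hgradF_cd.differentiable (by norm_num)
  have hfderivF : ∀ y v, fderiv ℝ F y v = ⟪gradient F y, v⟫ := by
    intro y v
    have : fderiv ℝ F y = InnerProductSpace.toDual ℝ _ (gradient F y) := by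
      simp [gradient]
    rw [this]
    simp [InnerProductSpace.toDual]
  have hlip : ∀ a b : EuclideanSpace ℝ (Fin d),
      ‖gradient F a - gradient F b‖ ≤ κ * ‖a - b‖ := fun a b =>
    convex_univ.norm_image_sub_le_of_norm_fderiv_le (fun x _ => hgradF_diff x)
      (fun x _ => hκ x) trivial trivial
  -- Step A: Taylor bound
  have hTaylor : ∀ x, |F x - (⟪wstar, x⟫ + bstar)| ≤ κ * ‖x - xstar‖ ^ 2 := by
    intro x
    set v : EuclideanSpace ℝ (Fin d) := x - xstar with hv
    have hpath : ∀ t : ℝ,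
        HasDerivAt (fun t : ℝ => F (xstar + t • v) - t * ⟪wstar, v⟫)
          (⟪gradient F (xstar + t • v) - wstar, v⟫) t := by
      intro t
      have h1 : HasDerivAt (fun t : ℝ => xstar + t • v) v t := by
        simpa using ((hasDerivAt_id t).smul_const v).const_add xstar
      have h2 : HasDerivAt (fun t : ℝ => F (xstar + t • v))
          (fderiv ℝ F (xstar + t • v) v) t :=
        (hFdiff _).hasFDerivAt.comp_hasDerivAt t h1
      have h3 : HasDerivAt (fun t : ℝ => t * ⟪wstar, v⟫) ⟪wstar, v⟫ t := by
        simpa using (hasDerivAt_id t).mul_const (⟪wstar, v⟫ : ℝ)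
      have h4 := h2.fun_sub h3
      rw [hfderivF] at h4
      simpa [inner_sub_left] using h4
    have hbound : ∀ t ∈ Set.Ico (0:ℝ) 1,
        ‖⟪gradient F (xstar + t • v) - wstar, v⟫‖ ≤ (κ * ‖v‖ ^ 2 : ℝ) := by
      intro t ht
      have h5 : ‖gradient F (xstar + t • v) - wstar‖ ≤ κ * ‖v‖ := by
        rw [hw]
        calc ‖gradient F (xstar + t • v) - gradient F xstar‖
            ≤ κ * ‖(xstar + t • v) - xstar‖ := hlip _ _
          _ = κ * (|t| * ‖v‖) := by rw [add_sub_cancel_left, norm_smul]; rfl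
          _ ≤ κ * (1 * ‖v‖) := by
              have : |t| ≤ 1 := by
                rw [abs_of_nonneg ht.1]; exact ht.2.le
              have := mul_le_mul_of_nonneg_right this (norm_nonneg v)
              nlinarith
          _ = κ * ‖v‖ := by ring_nf
      calc ‖⟪gradient F (xstar + t • v) - wstar, v⟫‖
          ≤ ‖gradient F (xstar + t • v) - wstar‖ * ‖v‖ := by
            exact abs_real_inner_le_norm _ _
        _ ≤ (κ * ‖v‖) * ‖v‖ :=
            mul_le_mul_of_nonneg_right h5 (norm_nonneg v)
        _ = κ * ‖v‖ ^ 2 := by ring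
    have key := norm_image_sub_le_of_norm_deriv_le_segment'
      (f := fun t : ℝ => F (xstar + t • v) - t * ⟪wstar, v⟫)
      (f' := fun t : ℝ => ⟪gradient F (xstar + t • v) - wstar, v⟫)
      (C := κ * ‖v‖ ^ 2) (a := 0) (b := 1)
      (fun t _ => (hpath t).hasDerivWithinAt) hbound 1 (by norm_num)
    have h6 : F (xstar + (1:ℝ) • v) - (1:ℝ) * ⟪wstar, v⟫
        - (F (xstar + (0:ℝ) • v) - (0:ℝ) * ⟪wstar, v⟫)
        = F x - (⟪wstar, x⟫ + bstar) := by
      rw [hb]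
      simp only [one_smul, zero_smul, add_zero, hv]
      rw [add_sub_cancel]
      rw [inner_sub_right]
      ring
    rw [h6] at key
    simpa [Real.norm_eq_abs] using key
  -- Step B: second-derivative bound along the segment
  have hψlip : ∀ x, |deriv ψcon (⟪wstar, x⟫ + bstar) - deriv ψcon (F x)|
      ≤ C * |F x - (⟪wstar, x⟫ + bstar)| := by
    intro x
    have hdψ : ContDiff ℝ 1 (deriv ψcon) := by
      have h2 : ContDiff ℝ ((1:ℕ) + 1) ψcon := by exact_mod_cast hψcon
      exact_mod_cast (contDiff_succ_iff_deriv.mp h2).2.2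
    have hseg : ∀ y ∈ segment ℝ (⟪wstar, x⟫ + bstar) (F x),
        ‖deriv (deriv ψcon) y‖ ≤ C := by
      rintro y ⟨a, b, ha, hb2, hab, rfl⟩
      have h1 := hψcon'' x b ⟨hb2, by linarith⟩
      rw [Real.norm_eq_abs]
      have h2 : b * F x + (1 - b) * (⟪wstar, x⟫ + bstar)
          = a • (⟪wstar, x⟫ + bstar) + b • F x := by
        have : a = 1 - b := by linarith
        rw [this]; simp [smul_eq_mul]; ring
      rw [← h2]
      exact h1
    have key := convex_segment (⟪wstar, x⟫ + bstar) (F x)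
      |>.norm_image_sub_le_of_norm_deriv_le
        (f := deriv ψcon) (fun y _ => (hdψ.differentiable (by norm_num)).differentiableAt)
        hseg (left_mem_segment ℝ _ _) (right_mem_segment ℝ _ _)
    calc |deriv ψcon (⟪wstar, x⟫ + bstar) - deriv ψcon (F x)|
        = ‖deriv ψcon (⟪wstar, x⟫ + bstar) - deriv ψcon (F x)‖ := rfl
      _ ≤ C * ‖(⟪wstar, x⟫ + bstar) - F x‖ := by
          have := convex_segment (⟪wstar, x⟫ + bstar) (F x)
            |>.norm_image_sub_le_of_norm_deriv_le
              (fun y _ => (hdψ.differentiable (by norm_num)).differentiableAt)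
              hseg (right_mem_segment ℝ _ _) (left_mem_segment ℝ _ _)
          exact this
      _ = C * |F x - (⟪wstar, x⟫ + bstar)| := by
          rw [Real.norm_eq_abs, abs_sub_comm]
  -- q is integrable
  have hq_int : Integrable q := by
    by_contra h
    rw [integral_undef h] at hq1
    norm_num at hq1
  -- tilde is continuous with controlled norm
  have htilde_cont : Continuous tilde := by
    have h1 : Continuous fun x : EuclideanSpace ℝ (Fin d) =>
        (WithLp.equiv 2 (EuclideanSpace ℝ (Fin d) × ℝ)).symm (x, 1) := by
      have h2 : Continuous fun y : EuclideanSpace ℝ (Fin d) × ℝ =>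
          (WithLp.prodContinuousLinearEquiv 2 ℝ (EuclideanSpace ℝ (Fin d)) ℝ).symm y :=
        (WithLp.prodContinuousLinearEquiv 2 ℝ _ _).symm.continuous
      exact h2.comp (continuous_id.prodMk continuous_const)
    have h3 : tilde = fun x =>
        (WithLp.equiv 2 (EuclideanSpace ℝ (Fin d) × ℝ)).symm (x, 1) := funext htilde
    rw [h3]; exact h1
  have htilde_norm : ∀ x, ‖tilde x‖ ≤ ‖x‖ + 1 := by
    intro x
    have h1 : ‖tilde x‖ ^ 2 = ‖x‖ ^ 2 + 1 := by
      rw [htilde]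
      have := WithLp.prod_norm_sq_eq_of_L2
        ((WithLp.equiv 2 (EuclideanSpace ℝ (Fin d) × ℝ)).symm (x, 1))
      simpa using this
    refine aux_le_of_sq_le_sq (norm_nonneg _) (by positivity) ?_
    rw [h1]
    nlinarith [norm_nonneg x]
  -- the dominating function
  set g : EuclideanSpace ℝ (Fin d) → ℝ :=
    fun x => q x * (k x * (‖x - xstar‖ ^ 2 * ‖tilde x‖)) with hg
  have hg0 : ∀ x, 0 ≤ g x := by
    intro x
    have := hq0 x; have := hk0 x
    positivity
  have hg_int : Integrable g := by
    have hM : ∀ x, ‖k x * (‖x - xstar‖ ^ 2 * ‖tilde x‖)‖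
        ≤ 15 * σ ^ 3 + (‖xstar‖ + 1) * (2 * σ ^ 2) := by
      intro x
      have hb1 : ‖tilde x‖ ≤ ‖x - xstar‖ + (‖xstar‖ + 1) := by
        calc ‖tilde x‖ ≤ ‖x‖ + 1 := htilde_norm x
          _ ≤ ‖x - xstar‖ + ‖xstar‖ + 1 := by
              have := norm_sub_norm_le x xstar
              linarith [norm_sub_le x xstar, norm_le_norm_add_norm_sub' x xstar]
          _ = ‖x - xstar‖ + (‖xstar‖ + 1) := by ring
      have hb2 := aux_exp_bound σ hσ ‖x - xstar‖ (‖xstar‖ + 1)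
        (norm_nonneg _) (by positivity)
      rw [Real.norm_eq_abs, abs_of_nonneg (mul_nonneg (hk0 x) (by positivity))]
      calc k x * (‖x - xstar‖ ^ 2 * ‖tilde x‖)
          ≤ k x * (‖x - xstar‖ ^ 2 * (‖x - xstar‖ + (‖xstar‖ + 1))) := by
            have hkx := hk0 x
            have h2 := mul_le_mul_of_nonneg_left hb1 (sq_nonneg ‖x - xstar‖)
            nlinarith
        _ ≤ 15 * σ ^ 3 + (‖xstar‖ + 1) * (2 * σ ^ 2) := by
            rw [hk]
            exact hb2
    have hm : AEStronglyMeasurable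
        (fun x => k x * (‖x - xstar‖ ^ 2 * ‖tilde x‖)) volume := by
      apply Continuous.aestronglyMeasurable
      have hkc : Continuous k := by
        have : k = fun x => Real.exp (-‖x - xstar‖ ^ 2 / (2 * σ ^ 2)) := funext hk
        rw [this]; fun_prop
      fun_prop
    have := hq_int.bdd_mul hm (Filter.Eventually.of_forall hM)
    have heq : (fun x => (k x * (‖x - xstar‖ ^ 2 * ‖tilde x‖)) * q x) = g := by
      funext x; rw [hg]; ring
    rw [heq] at this
    exact this
  have hg_le : ∫ x, g x ≤ σ ^ d * (σ ^ 2 * Ck) := by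
    have hgsub : ∀ y, g (xstar + σ • y)
        = σ ^ 2 * (q (xstar + σ • y) * Real.exp (-‖y‖ ^ 2 / 2) * ‖y‖ ^ 2
            * ‖tilde (xstar + σ • y)‖) := by
      intro y
      have hnorm : ‖xstar + σ • y - xstar‖ ^ 2 = σ ^ 2 * ‖y‖ ^ 2 := by
        rw [add_sub_cancel_left, norm_smul, Real.norm_eq_abs, abs_of_pos hσ, mul_pow]
      have hkval : k (xstar + σ • y) = Real.exp (-‖y‖ ^ 2 / 2) := by
        rw [hk, hnorm]
        congr 1
        field_simp
      rw [hg]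
      simp only []
      rw [hkval, hnorm]
      ring
    have hCoV : ∫ x, g x = σ ^ d * ∫ y, g (xstar + σ • y) := by
      have h1 : ∫ y, g (xstar + σ • y) = (σ ^ d)⁻¹ • ∫ z, g (xstar + z) := by
        have := MeasureTheory.Measure.integral_comp_smul_of_nonneg (μ := volume)
          (fun z => g (xstar + z)) σ (hR := hσ.le)
        simpa [finrank_euclideanSpace, Fintype.card_fin] using this
      have h2 : ∫ z, g (xstar + z) = ∫ x, g x :=
        integral_add_left_eq_self g xstar
      rw [h1, h2, smul_eq_mul, ← mul_assoc, mul_inv_cancel₀ (by positivity), one_mul]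
    rw [hCoV]
    have h3 : ∫ y, g (xstar + σ • y)
        = σ ^ 2 * ∫ y, (q (xstar + σ • y) * Real.exp (-‖y‖ ^ 2 / 2) * ‖y‖ ^ 2
            * ‖tilde (xstar + σ • y)‖) := by
      simp_rw [hgsub]
      rw [integral_const_mul]
    rw [h3]
    have hσd : (0:ℝ) ≤ σ ^ d := by positivity
    have hσ2 : (0:ℝ) ≤ σ ^ 2 := by positivity
    exact mul_le_mul_of_nonneg_left
      (mul_le_mul_of_nonneg_left hmom hσ2) hσd
  -- Step C: gradient at θs and its norm bound
  have hGs : gradient ℓ θs = ∫ x,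
      (q x * k x * (deriv ψcon (⟪wstar, x⟫ + bstar) - deriv ψcon (F x))) • tilde x := by
    have h1 := hgrad wstar bstar
    rw [← hθs] at h1
    rw [h1, ← integral_sub (hIgrad wstar bstar).2 (hIgrad wstar bstar).1]
    congr 1
    funext x
    rw [← sub_smul]
    congr 1
    rw [hp x, ← hψconF x]
    ring
  have hGs_norm : ‖gradient ℓ θs‖ ≤ κ * C * (σ ^ d * (σ ^ 2 * Ck)) := by
    rw [hGs]
    have hInt : Integrable fun x => κ * C * g x := hg_int.const_mul _
    have hpt : ∀ x, ‖(q x * k x * (deriv ψcon (⟪wstar, x⟫ + bstar) - deriv ψcon (F x)))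
        • tilde x‖ ≤ κ * C * g x := by
      intro x
      rw [norm_smul, Real.norm_eq_abs, abs_mul, abs_of_nonneg (hqk0 x)]
      have hΔ : |deriv ψcon (⟪wstar, x⟫ + bstar) - deriv ψcon (F x)|
          ≤ C * (κ * ‖x - xstar‖ ^ 2) :=
        le_trans (hψlip x) (mul_le_mul_of_nonneg_left (hTaylor x) hCpos.le)
      have h2 : q x * k x * |deriv ψcon (⟪wstar, x⟫ + bstar) - deriv ψcon (F x)| * ‖tilde x‖
          ≤ q x * k x * (C * (κ * ‖x - xstar‖ ^ 2)) * ‖tilde x‖ :=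
        mul_le_mul_of_nonneg_right (mul_le_mul_of_nonneg_left hΔ (hqk0 x)) (norm_nonneg _)
      refine le_trans h2 (le_of_eq ?_)
      rw [hg]
      ring
    calc ‖∫ x, (q x * k x * (deriv ψcon (⟪wstar, x⟫ + bstar) - deriv ψcon (F x))) • tilde x‖
        ≤ ∫ x, κ * C * g x :=
          norm_integral_le_of_norm_le hInt (Filter.Eventually.of_forall hpt)
      _ = κ * C * ∫ x, g x := integral_const_mul _ _
      _ ≤ κ * C * (σ ^ d * (σ ^ 2 * Ck)) :=
          mul_le_mul_of_nonneg_left hg_le (mul_nonneg hκ0 hCpos.le)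
  -- gradient of ℓ is C¹, and fderiv pairing
  have hgradℓ_cd : ContDiff ℝ 1 (gradient ℓ) := by
    have h1 : ContDiff ℝ 1 (fderiv ℝ ℓ) := hℓC2.fderiv_right le_rfl
    have h2 : gradient ℓ = fun y =>
        (InnerProductSpace.toDual ℝ (WithLp 2 (EuclideanSpace ℝ (Fin d) × ℝ))).symm
          (fderiv ℝ ℓ y) := rfl
    rw [h2]
    exact (InnerProductSpace.toDual ℝ _).symm.contDiff.comp h1
  have hfderivℓ : ∀ y v, fderiv ℝ ℓ y v = ⟪gradient ℓ y, v⟫ := by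
    intro y v
    have : fderiv ℝ ℓ y = InnerProductSpace.toDual ℝ _ (gradient ℓ y) := by
      simp [gradient]
    rw [this]
    simp [InnerProductSpace.toDual]
  -- bounds inside the ball
  have hmem_bounds : ∀ θ : WithLp 2 (EuclideanSpace ℝ (Fin d) × ℝ),
      θ ∈ Metric.closedBall θs (min W B) →
      ‖((WithLp.equiv 2 (EuclideanSpace ℝ (Fin d) × ℝ)) θ).1‖ ≤ 2 * W ∧
      |((WithLp.equiv 2 (EuclideanSpace ℝ (Fin d) × ℝ)) θ).2| ≤ 2 * B := by
    intro θ hθ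
    have hdist : ‖θ - θs‖ ≤ min W B := by
      rw [← dist_eq_norm]
      exact Metric.mem_closedBall.mp hθ
    have hsq := WithLp.prod_norm_sq_eq_of_L2 (θ - θs)
    have hfst_eq : (θ - θs).fst
        = ((WithLp.equiv 2 (EuclideanSpace ℝ (Fin d) × ℝ)) θ).1 - wstar := rfl
    have hsnd_eq : (θ - θs).snd
        = ((WithLp.equiv 2 (EuclideanSpace ℝ (Fin d) × ℝ)) θ).2 - bstar := rfl
    rw [hfst_eq, hsnd_eq] at hsq
    have h1 : ‖((WithLp.equiv 2 (EuclideanSpace ℝ (Fin d) × ℝ)) θ).1 - wstar‖ ≤ ‖θ - θs‖ := by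
      refine aux_le_of_sq_le_sq (norm_nonneg _) (norm_nonneg _) ?_
      rw [hsq]
      nlinarith [sq_nonneg ‖((WithLp.equiv 2 (EuclideanSpace ℝ (Fin d) × ℝ)) θ).2 - bstar‖]
    have h2 : ‖((WithLp.equiv 2 (EuclideanSpace ℝ (Fin d) × ℝ)) θ).2 - bstar‖ ≤ ‖θ - θs‖ := by
      refine aux_le_of_sq_le_sq (norm_nonneg _) (norm_nonneg _) ?_
      rw [hsq]
      nlinarith [sq_nonneg ‖((WithLp.equiv 2 (EuclideanSpace ℝ (Fin d) × ℝ)) θ).1 - wstar‖]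
    constructor
    · calc ‖((WithLp.equiv 2 (EuclideanSpace ℝ (Fin d) × ℝ)) θ).1‖
          ≤ ‖wstar‖ + ‖((WithLp.equiv 2 (EuclideanSpace ℝ (Fin d) × ℝ)) θ).1 - wstar‖ := by
            have := norm_add_le wstar
              (((WithLp.equiv 2 (EuclideanSpace ℝ (Fin d) × ℝ)) θ).1 - wstar)
            simpa using this
        _ ≤ W + min W B := add_le_add hwstar (le_trans h1 hdist)
        _ ≤ 2 * W := by
            have := min_le_left W B
            linarith
    · have h3 : |((WithLp.equiv 2 (EuclideanSpace ℝ (Fin d) × ℝ)) θ).2 - bstar|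
          ≤ min W B := by
        rw [← Real.norm_eq_abs]
        exact le_trans h2 hdist
      have := min_le_right W B
      have := abs_sub_abs_le_abs_sub
        ((WithLp.equiv 2 (EuclideanSpace ℝ (Fin d) × ℝ)) θ).2 bstar
      linarith
  -- Hessian lower bound on the ball
  have hhess_ball : ∀ θ ∈ Metric.closedBall θs (min W B),
      ∀ v : WithLp 2 (EuclideanSpace ℝ (Fin d) × ℝ),
      σ ^ d * Λ * ‖v‖ ^ 2 ≤ ⟪v, fderiv ℝ (gradient ℓ) θ v⟫ := by
    intro θ hθ v
    obtain ⟨h1, h2⟩ := hmem_bounds θ hθ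
    have h3 := hhess ((WithLp.equiv 2 (EuclideanSpace ℝ (Fin d) × ℝ)) θ).1
      ((WithLp.equiv 2 (EuclideanSpace ℝ (Fin d) × ℝ)) θ).2 v
    have h4 := heig ((WithLp.equiv 2 (EuclideanSpace ℝ (Fin d) × ℝ)) θ).1
      ((WithLp.equiv 2 (EuclideanSpace ℝ (Fin d) × ℝ)) θ).2 h1 h2 v
    rw [show ((WithLp.equiv 2 (EuclideanSpace ℝ (Fin d) × ℝ))).symm
        ((((WithLp.equiv 2 (EuclideanSpace ℝ (Fin d) × ℝ))) θ).1,
         (((WithLp.equiv 2 (EuclideanSpace ℝ (Fin d) × ℝ))) θ).2) = θ from rfl] at h3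
    rw [h3]
    exact h4
  have hθs_mem : θs ∈ Metric.closedBall θs (min W B) :=
    Metric.mem_closedBall_self (le_of_lt (lt_min hWpos hBpos))
  have : ContinuousSMul ℝ (WithLp 2 (EuclideanSpace ℝ (Fin d) × ℝ)) := inferInstance
  -- optimality condition
  have hopt : 0 ≤ ⟪gradient ℓ θ₀, θs - θ₀⟫ := by
    set wv : WithLp 2 (EuclideanSpace ℝ (Fin d) × ℝ) := θs - θ₀ with hwv
    have hρ : ∀ t : ℝ, HasDerivAt (fun t : ℝ => ℓ (θ₀ + t • wv))
        ⟪gradient ℓ (θ₀ + t • wv), wv⟫ t := by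
      intro t
      have h1 : HasDerivAt (fun t : ℝ => θ₀ + t • wv) wv t := by
        simpa using ((hasDerivAt_id t).smul_const wv).const_add θ₀
      have h2 : HasDerivAt (fun t : ℝ => ℓ (θ₀ + t • wv))
          (fderiv ℝ ℓ (θ₀ + t • wv) wv) t :=
        ((hℓC2.differentiable (by norm_num)) _).hasFDerivAt.comp_hasDerivAt t h1
      rw [hfderivℓ] at h2
      exact h2
    have hmin : ∀ t ∈ Set.Icc (0:ℝ) 1, ℓ θ₀ ≤ ℓ (θ₀ + t • wv) := by
      intro t ht
      apply hθ₀min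
      have hconv := convex_closedBall θs (min W B)
      have hcomb := hconv hθ₀mem hθs_mem
        (by linarith [ht.2] : (0:ℝ) ≤ 1 - t) ht.1 (by ring)
      have heq : θ₀ + t • wv = (1 - t) • θ₀ + t • θs := by
        rw [hwv]
        module
      rw [heq]
      exact hcomb
    have hd := hρ 0
    have hslope := hasDerivAt_iff_tendsto_slope.mp hd
    have hmono : nhdsWithin (0:ℝ) (Set.Ioi 0) ≤ nhdsWithin (0:ℝ) {(0:ℝ)}ᶜ :=
      nhdsWithin_mono 0 (fun t ht => ne_of_gt ht)
    have hslope' := hslope.mono_left hmono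
    have hev : ∀ᶠ t in nhdsWithin (0:ℝ) (Set.Ioi 0),
        0 ≤ slope (fun t : ℝ => ℓ (θ₀ + t • wv)) 0 t := by
      filter_upwards [Ioo_mem_nhdsGT_of_mem
        (Set.left_mem_Ico.mpr zero_lt_one)] with t ht
      have hle := hmin t ⟨ht.1.le, ht.2.le⟩
      rw [slope_def_field]
      simp only [zero_smul, add_zero, sub_zero]
      have ht0 : (0:ℝ) < t := ht.1
      apply div_nonneg _ ht0.le
      simpa using hle
    have hfin : (0:ℝ) ≤ ⟪gradient ℓ (θ₀ + (0:ℝ) • wv), wv⟫ :=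
      ge_of_tendsto hslope' hev
    simpa using hfin
  -- strong monotonicity along the segment
  have hsm : σ ^ d * Λ * ‖u‖ ^ 2 ≤ ⟪u, gradient ℓ θ₀⟫ - ⟪u, gradient ℓ θs⟫ := by
    set φ : ℝ → ℝ := fun t => ⟪u, gradient ℓ (θs + t • u)⟫ with hφ
    have hφd : ∀ t : ℝ, HasDerivAt φ
        ⟪u, (fderiv ℝ (gradient ℓ) (θs + t • u)) u⟫ t := by
      intro t
      have h1 : HasDerivAt (fun s : ℝ => θs + s • u) u t := by
        simpa using ((hasDerivAt_id t).smul_const u).const_add θs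
      have h2 : HasDerivAt (fun s : ℝ => gradient ℓ (θs + s • u))
          ((fderiv ℝ (gradient ℓ) (θs + t • u)) u) t :=
        ((hgradℓ_cd.differentiable (by norm_num)) _).hasFDerivAt.comp_hasDerivAt t h1
      have h3 := ((innerSL ℝ u).hasFDerivAt).comp_hasDerivAt t h2
      exact h3
    have hcont : Continuous φ :=
      continuous_iff_continuousAt.mpr fun t => (hφd t).continuousAt
    have hbound : ∀ t ∈ interior (Set.Icc (0:ℝ) 1),
        σ ^ d * Λ * ‖u‖ ^ 2 ≤ deriv φ t := by
      intro t ht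
      rw [interior_Icc] at ht
      rw [(hφd t).deriv]
      have hmem : θs + t • u ∈ Metric.closedBall θs (min W B) := by
        have hconv := convex_closedBall θs (min W B)
        have hcomb := hconv hθs_mem hθ₀mem
          (by linarith [ht.2] : (0:ℝ) ≤ 1 - t) ht.1.le (by ring)
        have heq : θs + t • u = (1 - t) • θs + t • θ₀ := by
          rw [hu]
          module
        rw [heq]
        exact hcomb
      exact hhess_ball _ hmem u
    have hkey := (convex_Icc (0:ℝ) 1).mul_sub_le_image_sub_of_le_deriv
      hcont.continuousOn
      (fun t _ => (hφd t).differentiableAt.differentiableWithinAt)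
      hbound 0 ⟨le_rfl, zero_le_one⟩ 1 ⟨zero_le_one, le_rfl⟩ zero_le_one
    have hp1 : φ 1 = ⟪u, gradient ℓ θ₀⟫ := by
      rw [hφ]
      simp only [one_smul]
      rw [hu]
      congr 2
      abel
    have hp0 : φ 0 = ⟪u, gradient ℓ θs⟫ := by
      rw [hφ]
      simp
    rw [hp1, hp0] at hkey
    linarith
  -- combine
  have hfinal : σ ^ d * Λ * ‖u‖ ^ 2 ≤ ‖gradient ℓ θs‖ * ‖u‖ := by
    have h1 : ⟪u, gradient ℓ θ₀⟫ ≤ 0 := by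
      have h2 : ⟪gradient ℓ θ₀, θs - θ₀⟫ = -⟪u, gradient ℓ θ₀⟫ := by
        rw [hu, real_inner_comm]
        rw [show θs - θ₀ = -(θ₀ - θs) from by abel]
        rw [inner_neg_left]
    
      linarith [hopt, h2 ▸ hopt]
    have h3 : -⟪u, gradient ℓ θs⟫ ≤ ‖gradient ℓ θs‖ * ‖u‖ := by
      have := abs_real_inner_le_norm u (gradient ℓ θs)
      have h4 : -⟪u, gradient ℓ θs⟫ ≤ |⟪u, gradient ℓ θs⟫| := neg_le_abs _
      calc -⟪u, gradient ℓ θs⟫ ≤ |⟪u, gradient ℓ θs⟫| := h4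
        _ ≤ ‖u‖ * ‖gradient ℓ θs‖ := this
        _ = ‖gradient ℓ θs‖ * ‖u‖ := mul_comm _ _
    linarith
  have hu_norm : ‖u‖ ≤ κ * C * Ck * σ ^ 2 / Λ := by
    have hσd : (0:ℝ) < σ ^ d := pow_pos hσ d
    rcases eq_or_lt_of_le (norm_nonneg u) with h0 | h0
    · rw [← h0]
      positivity
    · have hchain : σ ^ d * Λ * ‖u‖ ^ 2 ≤ κ * C * (σ ^ d * (σ ^ 2 * Ck)) * ‖u‖ :=
        le_trans hfinal (mul_le_mul_of_nonneg_right hGs_norm (norm_nonneg u))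
      rw [le_div_iff₀ hΛ]
      nlinarith [mul_pos hσd h0]
  -- conclude
  have hfst : ‖((WithLp.equiv 2 (EuclideanSpace ℝ (Fin d) × ℝ)) θ₀).1 - wstar‖ ≤ ‖u‖ := by
    have hfst_eq : (u).fst
        = ((WithLp.equiv 2 (EuclideanSpace ℝ (Fin d) × ℝ)) θ₀).1 - wstar := rfl
    have hsq := WithLp.prod_norm_sq_eq_of_L2 u
    rw [hfst_eq] at hsq
    refine aux_le_of_sq_le_sq (norm_nonneg _) (norm_nonneg _) ?_
    rw [hsq]
    nlinarith [sq_nonneg ‖(u).snd‖]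
  rw [← hw]
  exact le_trans hfst hu_norm
end

section
/- Let q be a probability measure on ℝ^d, let s₀ : ℝ^d → ℝ^m and g : ℝ^m → [0,∞) be measurable with ∫ g∘s₀ dq = 1, and let p := q.withDensity (g∘s₀). Let ψ : ℝ → ℝ be convex with ψ(g∘s₀) q-integrable. Then for every measurable s : ℝ^d → ℝ^m such that the pushforward s_*p is absolutely continuous with respect to s_*q with density ρ_s and ψ(ρ_s) is s_*q-integrable, one has ∫ ψ(ρ_s) d(s_*q) ≤ ∫ ψ(g∘s₀) dq; moreover ∫ ψ(ρ_{s₀}) d(s₀_*q) = ∫ ψ(g∘s₀) dq, so the supremum over measurable maps s of ∫ ψ(ρ_s) d(s_*q) is attained at s₀. -/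
open MeasureTheory

open Filter Set

noncomputable def subgrad (ψ : ℝ → ℝ) (b : ℝ) : ℝ :=
  sInf ((fun c => (ψ c - ψ b) / (c - b)) '' Set.Ioi b)

variable {ψ : ℝ → ℝ}

lemma subgrad_bddBelow (hψ : ConvexOn ℝ Set.univ ψ) (b : ℝ) :
    BddBelow ((fun c => (ψ c - ψ b) / (c - b)) '' Set.Ioi b) := by
  refine ⟨ψ b - ψ (b - 1), ?_⟩
  rintro y ⟨c, hc, rfl⟩
  have h := hψ.slope_mono_adjacent (mem_univ (b - 1)) (mem_univ c)
    (show b - 1 < b by linarith) hc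
  have h1 : b - (b - 1) = 1 := by ring
  rw [h1, div_one] at h
  linarith [h]

lemma subgrad_le_slope (hψ : ConvexOn ℝ Set.univ ψ) {b c : ℝ} (h : b < c) :
    subgrad ψ b ≤ (ψ c - ψ b) / (c - b) :=
  csInf_le (subgrad_bddBelow hψ b) ⟨c, h, rfl⟩

lemma slope_le_subgrad (hψ : ConvexOn ℝ Set.univ ψ) {a b : ℝ} (h : a < b) :
    (ψ b - ψ a) / (b - a) ≤ subgrad ψ b := by
  refine le_csInf ⟨(ψ (b + 1) - ψ b) / (b + 1 - b), ⟨b + 1, by simp, rfl⟩⟩ ?_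
  rintro y ⟨c, hc, rfl⟩
  exact hψ.slope_mono_adjacent (mem_univ a) (mem_univ c) h hc

lemma subgrad_smul_le (hψ : ConvexOn ℝ Set.univ ψ) (a b : ℝ) :
    ψ b + subgrad ψ b * (a - b) ≤ ψ a := by
  rcases lt_trichotomy a b with h | h | h
  · have h1 := slope_le_subgrad hψ h
    rw [div_le_iff₀ (by linarith : (0:ℝ) < b - a)] at h1
    have h2 : subgrad ψ b * (a - b) = -(subgrad ψ b * (b - a)) := by ring
    linarith
  · simp [h]
  · have h1 := subgrad_le_slope hψ h
    rw [le_div_iff₀ (by linarith : (0:ℝ) < a - b)] at h1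
    linarith

lemma subgrad_mono (hψ : ConvexOn ℝ Set.univ ψ) : Monotone (subgrad ψ) := by
  intro b₁ b₂ h
  rcases eq_or_lt_of_le h with rfl | h
  · exact le_rfl
  · exact (subgrad_le_slope hψ h).trans (slope_le_subgrad hψ h)

lemma abs_subgrad_le (hψ : ConvexOn ℝ Set.univ ψ) {M : ℝ}
    (hLip : ∀ x y, |ψ x - ψ y| ≤ M * |x - y|) (b : ℝ) : |subgrad ψ b| ≤ M := by
  have h1 := subgrad_le_slope hψ (show b < b + 1 by linarith)
  have h2 := slope_le_subgrad hψ (show b - 1 < b by linarith)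
  have e1 : b + 1 - b = 1 := by ring
  have e2 : b - (b - 1) = 1 := by ring
  rw [e1, div_one] at h1
  rw [e2, div_one] at h2
  have l1 := hLip (b + 1) b
  have l2 := hLip b (b - 1)
  have a1 : |b + 1 - b| = 1 := by rw [e1]; norm_num
  have a2 : |b - (b - 1)| = 1 := by rw [e2]; norm_num
  rw [a1, mul_one] at l1
  rw [a2, mul_one] at l2
  rw [abs_le]
  constructor
  · have := neg_abs_le (ψ b - ψ (b - 1)); linarith
  · have := le_abs_self (ψ (b + 1) - ψ b); linarith

lemma exists_rat_tangent (hψ : ConvexOn ℝ Set.univ ψ) (x : ℝ) {ε : ℝ} (hε : 0 < ε) :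
    ∃ r : ℚ, ψ x - ε ≤ ψ (r : ℝ) + subgrad ψ (r : ℝ) * (x - (r : ℝ)) := by
  set C :=  subgrad ψ x - subgrad ψ (x - 1) with hC
  have hC0 : 0 ≤ C := sub_nonneg.2 (subgrad_mono hψ (by linarith))
  set δ := min 1 (ε / (C + 1)) with hδ
  have hδ0 : 0 < δ := lt_min one_pos (div_pos hε (by linarith))
  obtain ⟨r, hr1, hr2⟩ := exists_rat_btwn (show x - δ < x by linarith)
  refine ⟨r, ?_⟩
  have h1 := subgrad_smul_le hψ (r : ℝ) x
  have hr0 : subgrad ψ (x - 1) ≤ subgrad ψ (r : ℝ) := by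
    refine subgrad_mono hψ ?_
    have : δ ≤ 1 := min_le_left _ _
    linarith
  have hxr : 0 < x - (r : ℝ) := by linarith
  have hxrδ : x - (r : ℝ) < δ := by linarith
  have e1 : 0 ≤ (subgrad ψ (r : ℝ) - subgrad ψ x + C) * (x - (r : ℝ)) :=
    mul_nonneg (by simp [hC]; linarith) hxr.le
  have e2 : C * (x - (r : ℝ)) ≤ C * δ := mul_le_mul_of_nonneg_left hxrδ.le hC0
  have e3 : C * δ ≤ ε := by
    have hδ2 : δ ≤ ε / (C + 1) := min_le_right _ _
    have h4 : C * δ ≤ C * (ε / (C + 1)) := mul_le_mul_of_nonneg_left hδ2 hC0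
    have h5 : C * (ε / (C + 1)) ≤ ε := by
      rw [mul_div_assoc', div_le_iff₀ (by linarith : (0:ℝ) < C + 1)]
      nlinarith
    exact h4.trans h5
  nlinarith [h1, e1, e2, e3]

/-- Enumeration of the rationals. -/
noncomputable def ratEnum (k : ℕ) : ℝ := ((Denumerable.eqv ℚ).symm k : ℚ)

/-- Tangent line of `ψ` at the `k`-th rational. -/
noncomputable def ell (ψ : ℝ → ℝ) (k : ℕ) (x : ℝ) : ℝ :=
  ψ (ratEnum k) + subgrad ψ (ratEnum k) * (x - ratEnum k)

lemma ell_le (hψ : ConvexOn ℝ Set.univ ψ) (k : ℕ) (x : ℝ) : ell ψ k x ≤ ψ x :=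
  subgrad_smul_le hψ x (ratEnum k)

lemma convexOn_ell (ψ : ℝ → ℝ) (k : ℕ) : ConvexOn ℝ Set.univ (ell ψ k) := by
  refine ⟨convex_univ, fun x _ y _ a b _ _ hab => le_of_eq ?_⟩
  simp only [ell, smul_eq_mul]
  linear_combination (subgrad ψ (ratEnum k) * ratEnum k - ψ (ratEnum k)) * hab

lemma lipschitzWith_ell (ψ : ℝ → ℝ) (k : ℕ) :
    LipschitzWith ‖subgrad ψ (ratEnum k)‖₊ (ell ψ k) := by
  refine LipschitzWith.of_dist_le_mul fun x y => ?_
  simp only [ell, Real.dist_eq]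
  have : ψ (ratEnum k) + subgrad ψ (ratEnum k) * (x - ratEnum k) -
      (ψ (ratEnum k) + subgrad ψ (ratEnum k) * (y - ratEnum k))
      = subgrad ψ (ratEnum k) * (x - y) := by ring
  rw [this, abs_mul]
  gcongr
  simp [Real.norm_eq_abs]

/-- Increasing sequence of piecewise-linear minorants of `ψ`. -/
noncomputable def Psi (ψ : ℝ → ℝ) : ℕ → ℝ → ℝ
  | 0 => ell ψ 0
  | (n + 1) => fun x => max (Psi ψ n x) (ell ψ (n + 1) x)

lemma Psi_le (hψ : ConvexOn ℝ Set.univ ψ) : ∀ n x, Psi ψ n x ≤ ψ x := by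
  intro n
  induction n with
  | zero => exact fun x => ell_le hψ 0 x
  | succ n ih => exact fun x => max_le (ih x) (ell_le hψ (n + 1) x)

lemma Psi_mono (ψ : ℝ → ℝ) (x : ℝ) : Monotone fun n => Psi ψ n x :=
  monotone_nat_of_le_succ fun n => le_max_left _ _

lemma ell_le_Psi (ψ : ℝ → ℝ) (k : ℕ) (x : ℝ) : ell ψ k x ≤ Psi ψ k x := by
  cases k with
  | zero => exact le_rfl
  | succ n => exact le_max_right _ _

lemma convexOn_Psi (ψ : ℝ → ℝ) (n : ℕ) : ConvexOn ℝ Set.univ (Psi ψ n) := by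
  induction n with
  | zero => exact convexOn_ell ψ 0
  | succ n ih => exact ih.sup (convexOn_ell ψ (n + 1))

lemma lipschitz_Psi (ψ : ℝ → ℝ) (n : ℕ) : ∃ K : NNReal, LipschitzWith K (Psi ψ n) := by
  induction n with
  | zero => exact ⟨_, lipschitzWith_ell ψ 0⟩
  | succ n ih =>
    obtain ⟨K, hK⟩ := ih
    exact ⟨_, hK.max (lipschitzWith_ell ψ (n + 1))⟩

lemma Psi_tendsto (hψ : ConvexOn ℝ Set.univ ψ) (x : ℝ) :
    Filter.Tendsto (fun n => Psi ψ n x) Filter.atTop (nhds (ψ x)) := by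
  have hbdd : BddAbove (Set.range fun n => Psi ψ n x) :=
    ⟨ψ x, by rintro y ⟨n, rfl⟩; exact Psi_le hψ n x⟩
  have h1 : Filter.Tendsto (fun n => Psi ψ n x) Filter.atTop
      (nhds (⨆ n, Psi ψ n x)) := tendsto_atTop_ciSup (Psi_mono ψ x) hbdd
  have h2 : (⨆ n, Psi ψ n x) = ψ x := by
    refine le_antisymm (ciSup_le fun n => Psi_le hψ n x) ?_
    refine le_of_forall_pos_le_add fun ε hε => ?_
    obtain ⟨r, hr⟩ := exists_rat_tangent hψ x hε
    set k := (Denumerable.eqv ℚ) r with hk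
    have hek : ratEnum k = (r : ℝ) := by simp [ratEnum, hk]
    have h3 : ψ x - ε ≤ ell ψ k x := by rw [ell, hek]; exact hr
    have h4 : ell ψ k x ≤ ⨆ n, Psi ψ n x :=
      (ell_le_Psi ψ k x).trans (le_ciSup hbdd k)
    linarith
  rwa [h2] at h1

lemma lipschitz_real {ψ' : ℝ → ℝ} {M : ℝ} (hM : 0 ≤ M)
    (hLip : ∀ x y, |ψ' x - ψ' y| ≤ M * |x - y|) : LipschitzWith M.toNNReal ψ' := by
  refine LipschitzWith.of_dist_le_mul fun x y => ?_
  rw [Real.dist_eq, Real.dist_eq, Real.coe_toNNReal _ hM]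
  exact hLip x y

lemma integrable_lip_comp {α : Type*} [MeasurableSpace α] {μ : Measure α}
    [IsFiniteMeasure μ] {ψ' : ℝ → ℝ} {M : ℝ} (hM : 0 ≤ M)
    (hLip : ∀ x y, |ψ' x - ψ' y| ≤ M * |x - y|) {f : α → ℝ} (hf : Integrable f μ) :
    Integrable (fun x => ψ' (f x)) μ := by
  refine Integrable.mono' ((integrable_const (|ψ' 0|)).add (hf.abs.const_mul M))
    ((lipschitz_real hM hLip).continuous.comp_aestronglyMeasurable hf.1)
    (Filter.Eventually.of_forall fun x => ?_)
  have h1 := hLip (f x) 0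
  rw [sub_zero] at h1
  have h2 := abs_sub_abs_le_abs_sub (ψ' (f x)) (ψ' 0)
  rw [Real.norm_eq_abs]
  simp only [Pi.add_apply]
  linarith

lemma core_le {α β : Type*} [MeasurableSpace α] [MeasurableSpace β]
    (q : Measure α) [IsProbabilityMeasure q]
    (G : α → ℝ) (hGm : Measurable G) (hG0 : ∀ x, 0 ≤ G x) (hGint : Integrable G q)
    (s : α → β) (hs : Measurable s)
    (ρ : β → ℝ) (hρ : Measurable ρ) (hρ0 : ∀ z, 0 ≤ ρ z)
    (hpush : Measure.map s (q.withDensity fun x => ENNReal.ofReal (G x))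
       = (Measure.map s q).withDensity fun z => ENNReal.ofReal (ρ z))
    (hρints : Integrable (fun x => ρ (s x)) q)
    (ψ' : ℝ → ℝ) (hψ' : ConvexOn ℝ Set.univ ψ') (M : ℝ) (hM : 0 ≤ M)
    (hLip : ∀ x y, |ψ' x - ψ' y| ≤ M * |x - y|) :
    ∫ z, ψ' (ρ z) ∂(Measure.map s q) ≤ ∫ x, ψ' (G x) ∂q := by
  set φ := subgrad ψ' with hφdef
  have hφmeas : Measurable φ := (subgrad_mono hψ').measurable
  have hφbd : ∀ b, |φ b| ≤ M := abs_subgrad_le hψ' hLip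
  have hψ'cont : Continuous ψ' := (lipschitz_real hM hLip).continuous
  set R : α → ℝ := fun x => ρ (s x) with hRdef
  have hRm : Measurable R := hρ.comp hs
  -- integrability
  have hψ'G : Integrable (fun x => ψ' (G x)) q := integrable_lip_comp hM hLip hGint
  have hψ'R : Integrable (fun x => ψ' (R x)) q := integrable_lip_comp hM hLip hρints
  have hφRG : Integrable (fun x => φ (R x) * G x) q := by
    refine Integrable.mono' (hGint.abs.const_mul M)
      ((hφmeas.comp hRm).mul hGm).aestronglyMeasurable
      (Filter.Eventually.of_forall fun x => ?_)
    rw [Real.norm_eq_abs, abs_mul]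
    exact mul_le_mul_of_nonneg_right (hφbd _) (abs_nonneg _)
  have hφRR : Integrable (fun x => φ (R x) * R x) q := by
    refine Integrable.mono' (hρints.abs.const_mul M)
      ((hφmeas.comp hRm).mul hRm).aestronglyMeasurable
      (Filter.Eventually.of_forall fun x => ?_)
    rw [Real.norm_eq_abs, abs_mul]
    exact mul_le_mul_of_nonneg_right (hφbd _) (abs_nonneg _)
  have hcorr : Integrable (fun x => φ (R x) * (G x - R x)) q := by
    have := hφRG.sub hφRR
    rw [show (fun x => φ (R x) * (G x - R x)) = (fun x => φ (R x) * G x) - (fun x => φ (R x) * R x) from funext fun x => mul_sub _ _ _]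
    exact this
  -- pointwise subgradient inequality
  have hkey : ∀ x, ψ' (R x) + φ (R x) * (G x - R x) ≤ ψ' (G x) :=
    fun x => subgrad_smul_le hψ' (G x) (R x)
  have hmain : ∫ x, (ψ' (R x) + φ (R x) * (G x - R x)) ∂q ≤ ∫ x, ψ' (G x) ∂q :=
    integral_mono (hψ'R.add hcorr) hψ'G hkey
  rw [integral_add hψ'R hcorr] at hmain
  -- the pushforward identity for integrals
  have keyW : ∀ F : β → ℝ, Measurable F →
      ∫ x, F (s x) * G x ∂q = ∫ z, F z * ρ z ∂(Measure.map s q) := by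
    intro F hF
    have hd : (fun x => ENNReal.ofReal (G x)) = fun x => ((Real.toNNReal (G x) : NNReal) : ENNReal) := rfl
    have hd2 : (fun z => ENNReal.ofReal (ρ z)) = fun z => ((Real.toNNReal (ρ z) : NNReal) : ENNReal) := rfl
    have h1 : ∫ x, F (s x) ∂(q.withDensity fun x => ENNReal.ofReal (G x))
        = ∫ x, F (s x) * G x ∂q := by
      rw [hd, integral_withDensity_eq_integral_smul hGm.real_toNNReal]
      congr 1
      ext x
      rw [NNReal.smul_def, Real.coe_toNNReal _ (hG0 x), smul_eq_mul, mul_comm]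
    have h2 : ∫ x, F (s x) ∂(q.withDensity fun x => ENNReal.ofReal (G x))
        = ∫ z, F z ∂(Measure.map s (q.withDensity fun x => ENNReal.ofReal (G x))) :=
      (integral_map hs.aemeasurable (hF.aestronglyMeasurable)).symm
    have h3 : ∫ z, F z ∂((Measure.map s q).withDensity fun z => ENNReal.ofReal (ρ z))
        = ∫ z, F z * ρ z ∂(Measure.map s q) := by
      rw [hd2, integral_withDensity_eq_integral_smul hρ.real_toNNReal]
      congr 1
      ext z
      rw [NNReal.smul_def, Real.coe_toNNReal _ (hρ0 z), smul_eq_mul, mul_comm]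
    rw [← h1, h2, hpush, h3]
  have keyM : ∀ F : β → ℝ, Measurable F →
      ∫ x, F (s x) ∂q = ∫ z, F z ∂(Measure.map s q) :=
    fun F hF => (integral_map hs.aemeasurable hF.aestronglyMeasurable).symm
  -- the correction term vanishes
  have hzero : ∫ x, φ (R x) * (G x - R x) ∂q = 0 := by
    have e0 : ∫ x, φ (R x) * (G x - R x) ∂q
        = ∫ x, φ (R x) * G x ∂q - ∫ x, φ (R x) * R x ∂q := by
      rw [← integral_sub hφRG hφRR]
      congr 1
      ext x
      ring
    have e1 : ∫ x, φ (R x) * G x ∂q = ∫ z, φ (ρ z) * ρ z ∂(Measure.map s q) :=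
      keyW (fun z => φ (ρ z)) (hφmeas.comp hρ)
    have e2 : ∫ x, φ (R x) * R x ∂q = ∫ z, φ (ρ z) * ρ z ∂(Measure.map s q) :=
      keyM (fun z => φ (ρ z) * ρ z) ((hφmeas.comp hρ).mul hρ)
    rw [e0, e1, e2, sub_self]
  have efin : ∫ x, ψ' (R x) ∂q = ∫ z, ψ' (ρ z) ∂(Measure.map s q) :=
    keyM (fun z => ψ' (ρ z)) (hψ'cont.measurable.comp hρ)
  rw [hzero, add_zero, efin] at hmain
  exact hmain

/-- The paper's theorem on finding density ratio preserving maps: any map `s₀` through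
which the density ratio `dp/dq` factors maximizes the pushforward f-divergence
`∫ ψ(ρ_s) d(s_*q)` over measurable maps `s`, the maximum being `D_ψ[p,q] = ∫ ψ(g∘s₀) dq`. -/
theorem stmt12 {d m : ℕ}
    (q : Measure (EuclideanSpace ℝ (Fin d))) [IsProbabilityMeasure q]
    (s₀ : EuclideanSpace ℝ (Fin d) → EuclideanSpace ℝ (Fin m)) (hs₀ : Measurable s₀)
    (g : EuclideanSpace ℝ (Fin m) → ℝ) (hgm : Measurable g) (hg0 : ∀ z, 0 ≤ g z)
    (hnorm : ∫ x, g (s₀ x) ∂q = 1)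
    (p : Measure (EuclideanSpace ℝ (Fin d)))
    (hp : p = q.withDensity fun x => ENNReal.ofReal (g (s₀ x)))
    (ψ : ℝ → ℝ) (hψ : ConvexOn ℝ Set.univ ψ)
    (hψint : Integrable (fun x => ψ (g (s₀ x))) q) :
    (∀ s : EuclideanSpace ℝ (Fin d) → EuclideanSpace ℝ (Fin m), Measurable s →
      ∀ ρ : EuclideanSpace ℝ (Fin m) → ℝ, Measurable ρ → (∀ z, 0 ≤ ρ z) →
      Measure.map s p = (Measure.map s q).withDensity (fun z => ENNReal.ofReal (ρ z)) →
      Integrable (fun z => ψ (ρ z)) (Measure.map s q) →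
      ∫ z, ψ (ρ z) ∂(Measure.map s q) ≤ ∫ x, ψ (g (s₀ x)) ∂q) ∧
    (∀ ρ₀ : EuclideanSpace ℝ (Fin m) → ℝ, Measurable ρ₀ → (∀ z, 0 ≤ ρ₀ z) →
      Measure.map s₀ p = (Measure.map s₀ q).withDensity (fun z => ENNReal.ofReal (ρ₀ z)) →
      Integrable (fun z => ψ (ρ₀ z)) (Measure.map s₀ q) →
      ∫ z, ψ (ρ₀ z) ∂(Measure.map s₀ q) = ∫ x, ψ (g (s₀ x)) ∂q) := by
  set G : EuclideanSpace ℝ (Fin d) → ℝ := fun x => g (s₀ x) with hGdef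
  have hGm : Measurable G := hgm.comp hs₀
  have hG0 : ∀ x, 0 ≤ G x := fun x => hg0 (s₀ x)
  have hGint : Integrable G q := by
    by_contra h
    rw [integral_undef h] at hnorm
    norm_num at hnorm
  have hlG : ∫⁻ x, ENNReal.ofReal (G x) ∂q = 1 := by
    rw [← ofReal_integral_eq_lintegral_ofReal hGint (Filter.Eventually.of_forall hG0), hnorm]
    simp
  have hp1 : p Set.univ = 1 := by
    rw [hp, withDensity_apply _ MeasurableSet.univ, Measure.restrict_univ]
    exact hlG
  -- a helper giving lintegral-1 and integrability of ρ for any admissible (s, ρ)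
  have haux : ∀ s : EuclideanSpace ℝ (Fin d) → EuclideanSpace ℝ (Fin m), Measurable s →
      ∀ ρ : EuclideanSpace ℝ (Fin m) → ℝ, Measurable ρ → (∀ z, 0 ≤ ρ z) →
      Measure.map s p = (Measure.map s q).withDensity (fun z => ENNReal.ofReal (ρ z)) →
      (∫⁻ z, ENNReal.ofReal (ρ z) ∂(Measure.map s q)) = 1 ∧
        Integrable ρ (Measure.map s q) := by
    intro s hs ρ hρ hρ0 habs
    have h1 : (Measure.map s p) Set.univ = 1 := by
      rw [Measure.map_apply hs MeasurableSet.univ, Set.preimage_univ, hp1]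
    rw [habs, withDensity_apply _ MeasurableSet.univ, Measure.restrict_univ] at h1
    refine ⟨h1, ?_⟩
    have hrw : ρ = fun z => (ENNReal.ofReal (ρ z)).toReal :=
      funext fun z => (ENNReal.toReal_ofReal (hρ0 z)).symm
    rw [hrw]
    exact integrable_toReal_of_lintegral_ne_top
      (hρ.ennreal_ofReal.aemeasurable) (by rw [h1]; exact ENNReal.one_ne_top)
  constructor
  · -- inequality for every density ratio preserving candidate
    intro s hs ρ hρ hρ0 habs hψρint
    obtain ⟨hone, hρintν⟩ := haux s hs ρ hρ hρ0 habs
    have hρints : Integrable (fun x => ρ (s x)) q :=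
      (integrable_map_measure hρ.aestronglyMeasurable hs.aemeasurable).mp hρintν
    have hprob : IsProbabilityMeasure (Measure.map s q) :=
      Measure.isProbabilityMeasure_map hs.aemeasurable
    -- bound for each piecewise-linear approximation
    have hstep : ∀ n, ∫ z, Psi ψ n (ρ z) ∂(Measure.map s q) ≤ ∫ x, ψ (G x) ∂q := by
      intro n
      obtain ⟨K, hK⟩ := lipschitz_Psi ψ n
      have hLip : ∀ x y, |Psi ψ n x - Psi ψ n y| ≤ (K : ℝ) * |x - y| := by
        intro x y
        have := hK.dist_le_mul x y
        rwa [Real.dist_eq, Real.dist_eq] at this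
      have h1 : ∫ z, Psi ψ n (ρ z) ∂(Measure.map s q) ≤ ∫ x, Psi ψ n (G x) ∂q :=
        core_le q G hGm hG0 hGint s hs ρ hρ hρ0 (by rw [← hp]; exact habs) hρints
          (Psi ψ n) (convexOn_Psi ψ n) (K : ℝ) K.coe_nonneg hLip
      have h2 : ∫ x, Psi ψ n (G x) ∂q ≤ ∫ x, ψ (G x) ∂q :=
        integral_mono (integrable_lip_comp K.coe_nonneg hLip hGint) hψint
          fun x => Psi_le hψ n (G x)
      exact h1.trans h2
    -- dominated convergence
    have hPsi0int : Integrable (fun z => Psi ψ 0 (ρ z)) (Measure.map s q) := by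
      obtain ⟨K, hK⟩ := lipschitz_Psi ψ 0
      have hLip : ∀ x y, |Psi ψ 0 x - Psi ψ 0 y| ≤ (K : ℝ) * |x - y| := by
        intro x y
        have := hK.dist_le_mul x y
        rwa [Real.dist_eq, Real.dist_eq] at this
      exact integrable_lip_comp K.coe_nonneg hLip hρintν
    have hlim : Filter.Tendsto (fun n => ∫ z, Psi ψ n (ρ z) ∂(Measure.map s q))
        Filter.atTop (nhds (∫ z, ψ (ρ z) ∂(Measure.map s q))) := by
      refine tendsto_integral_of_dominated_convergence
        (fun z => |Psi ψ 0 (ρ z)| + |ψ (ρ z)|) (fun n => ?_) (hPsi0int.abs.add hψρint.abs)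
        (fun n => Filter.Eventually.of_forall fun z => ?_)
        (Filter.Eventually.of_forall fun z => Psi_tendsto hψ (ρ z))
      · obtain ⟨K, hK⟩ := lipschitz_Psi ψ n
        exact hK.continuous.comp_aestronglyMeasurable hρ.aestronglyMeasurable
      · have h1 : Psi ψ 0 (ρ z) ≤ Psi ψ n (ρ z) := Psi_mono ψ (ρ z) (Nat.zero_le n)
        have h2 : Psi ψ n (ρ z) ≤ ψ (ρ z) := Psi_le hψ n (ρ z)
        show ‖Psi ψ n (ρ z)‖ ≤ |Psi ψ 0 (ρ z)| + |ψ (ρ z)|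
        rw [Real.norm_eq_abs, abs_le]
        constructor
        · have := neg_abs_le (Psi ψ 0 (ρ z))
          have := abs_nonneg (ψ (ρ z))
          linarith
        · have := le_abs_self (ψ (ρ z))
          have := abs_nonneg (Psi ψ 0 (ρ z))
          linarith
    exact le_of_tendsto hlim (Filter.Eventually.of_forall hstep)
  · -- equality for s₀
    intro ρ₀ hρ₀ hρ₀0 habs hψρint
    obtain ⟨hone, _⟩ := haux s₀ hs₀ ρ₀ hρ₀ hρ₀0 habs
    have hgmE : Measurable fun z => ENNReal.ofReal (g z) := hgm.ennreal_ofReal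
    have hmap : Measure.map s₀ p = (Measure.map s₀ q).withDensity fun z => ENNReal.ofReal (g z) := by
      rw [hp]
      ext A hA
      rw [Measure.map_apply hs₀ hA, withDensity_apply _ (hs₀ hA), withDensity_apply _ hA,
        setLIntegral_map hA hgmE hs₀]
    have heq : (Measure.map s₀ q).withDensity (fun z => ENNReal.ofReal (ρ₀ z))
        = (Measure.map s₀ q).withDensity fun z => ENNReal.ofReal (g z) := by
      rw [← habs, hmap]
    have hae : (fun z => ENNReal.ofReal (ρ₀ z)) =ᵐ[Measure.map s₀ q]
        fun z => ENNReal.ofReal (g z) :=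
      (withDensity_eq_iff hρ₀.ennreal_ofReal.aemeasurable hgmE.aemeasurable
        (by rw [hone]; exact ENNReal.one_ne_top)).mp heq
    have haer : ρ₀ =ᵐ[Measure.map s₀ q] g := by
      filter_upwards [hae] with z hz
      rwa [ENNReal.ofReal_eq_ofReal_iff (hρ₀0 z) (hg0 z)] at hz
    have hψc : Continuous ψ :=
      continuousOn_univ.mp (hψ.continuousOn isOpen_univ)
    have h1 : ∫ z, ψ (ρ₀ z) ∂(Measure.map s₀ q) = ∫ z, ψ (g z) ∂(Measure.map s₀ q) :=
      integral_congr_ae (haer.mono fun z hz => by dsimp only; rw [hz])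
    have h2 : ∫ z, ψ (g z) ∂(Measure.map s₀ q) = ∫ x, ψ (g (s₀ x)) ∂q :=
      integral_map hs₀.aemeasurable (hψc.measurable.comp hgm).aestronglyMeasurable
    rw [h1, h2]
end
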